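/- arXiv:1209.3139 — 9 statements merged into one kernel-verified Lean document; each statement's English description precedes it below -/
import Mathlib

section
/- If (X, d) is a metric space such that for every compact set C ⊆ X and every r > 0 the closure of C + r is compact (equivalently, X is a proper metric space), then the space H(X) of nonempty compact subsets of X with the Hausdorff metric has the same property: for every compact set 𝒞 ⊆ H(X) and every r > 0, the closure of 𝒞 + r (taken in the Hausdorff metric) is compact. -/
/-!
Testing the hypothesis on singletons shows that `X` is proper. In a proper space every compact
set at Hausdorff distance at most `ρ` from `C` lies in the closed `ρ`-thickening of `C`, which is
compact, and the nonempty compact subsets of a compact set form a compact family; so the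
hyperspace is proper as well, and the closure of the bounded set `𝒞 + r` is compact.
-/

/-- The set `S + r = {y : ∃ x ∈ S, d(x,y) < r}`. -/
def plusSet {Y : Type*} [MetricSpace Y] (S : Set Y) (r : ℝ) : Set Y :=
  {y | ∃ x ∈ S, dist x y < r}

open Metric TopologicalSpace

theorem plusSet_eq_thickening {Y : Type*} [MetricSpace Y] (S : Set Y) (r : ℝ) :
    plusSet S r = thickening r S := by
  ext y
  simp only [plusSet, Set.mem_ofPred_eq, mem_thickening_iff, dist_comm]

theorem properSpace_of_isCompact_closure_plusSet {X : Type*} [MetricSpace X]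
    (hX : ∀ C : Set X, IsCompact C → ∀ r : ℝ, 0 < r → IsCompact (closure (plusSet C r))) :
    ProperSpace X := by
  refine ProperSpace.of_isCompact_closedBall_of_le 0 fun x r hr => ?_
  refine (hX {x} isCompact_singleton (r + 1) (by linarith)).of_isClosed_subset isClosed_closedBall
    (subset_closure.trans' fun y hy => ⟨x, rfl, ?_⟩)
  rw [dist_comm]
  linarith [mem_closedBall.1 hy]

theorem NonemptyCompacts.subset_cthickening_of_dist_le {X : Type*} [MetricSpace X]
    {C K : NonemptyCompacts X} {ρ : ℝ} (h : dist K C ≤ ρ) :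
    (K : Set X) ⊆ cthickening ρ C := fun _ hx =>
  (infEDist_le_hausdorffEDist_of_mem hx).trans <|
    (edist_le_ofReal (dist_nonneg.trans h)).2 h

instance NonemptyCompacts.instProperSpace {X : Type*} [MetricSpace X] [ProperSpace X] :
    ProperSpace (NonemptyCompacts X) where
  isCompact_closedBall C _ :=
    (NonemptyCompacts.isCompact_subsets_of_isCompact C.isCompact.cthickening).of_isClosed_subset
      isClosed_closedBall fun _ hK =>
        NonemptyCompacts.subset_cthickening_of_dist_le (mem_closedBall.1 hK)

/-- If `(X, d)` is a metric space such that for every compact `C ⊆ X`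
and every `r > 0` the closure of `C + r` is compact, then the space of nonempty compact
subsets of `X` with the Hausdorff metric has the same property. -/
theorem nonemptyCompacts_locally_compact_of_locally_compact
    {X : Type*} [MetricSpace X]
    (hX : ∀ C : Set X, IsCompact C → ∀ r : ℝ, 0 < r → IsCompact (closure (plusSet C r))) :
    ∀ 𝒞 : Set (TopologicalSpace.NonemptyCompacts X), IsCompact 𝒞 → ∀ r : ℝ, 0 < r →
      IsCompact (closure (plusSet 𝒞 r)) := by
  have : ProperSpace X := properSpace_of_isCompact_closure_plusSet hX
  intro 𝒞 h𝒞 r _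
  rw [plusSet_eq_thickening]
  exact h𝒞.isBounded.thickening.isCompact_closure
end

section
/- Let (X, d) be a proper metric space (the closure of C + r is compact for every compact C ⊆ X and every r > 0), and let f_1, …, f_N : X → X be continuous maps. Then the induced map F : H(X) → H(X), defined by F(B) = f_1(B) ∪ … ∪ f_N(B), is continuous with respect to the Hausdorff metric. -/
open TopologicalSpace

/-- The map `B ↦ f₁(B) ∪ ⋯ ∪ f_N(B)` induced by an IFS on the space of nonempty
compact subsets. -/
noncomputable def ifsMap {X : Type*} [MetricSpace X] {N : ℕ} [NeZero N]
    (f : Fin N → X → X) (hf : ∀ n, Continuous (f n))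
    (B : NonemptyCompacts X) : NonemptyCompacts X :=
  ⟨⟨⋃ n, f n '' (B : Set X), isCompact_iUnion fun n => B.isCompact.image (hf n)⟩,
    ⟨f 0 B.nonempty.choose,
      Set.mem_iUnion.2 ⟨0, Set.mem_image_of_mem _ B.nonempty.choose_spec⟩⟩⟩

/-!
A continuous map is uniformly continuous *at* a compact set `K`: there is one `δ` such that
`d(x, y) < δ` with `x ∈ K` (but `y` arbitrary) forces `d(f x, f y) < ε`, and one `δ` serves
finitely many maps at once. If `d_H(A, B) < δ`, every point of `A` is `δ`-close to a point of
the compact set `B` and vice versa, so every point of `F(A)` is `ε`-close to a point of `F(B)`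
and vice versa.
-/

open Metric

theorem IsCompact.exists_pos_forall_dist_lt_of_continuousAt {ι X Y : Type*} [Finite ι]
    [PseudoMetricSpace X] [PseudoMetricSpace Y] {K : Set X} (hK : IsCompact K)
    {f : ι → X → Y} (hf : ∀ i, ∀ x ∈ K, ContinuousAt (f i) x) {ε : ℝ} (hε : 0 < ε) :
    ∃ δ > 0, ∀ i, ∀ x ∈ K, ∀ y, dist x y < δ → dist (f i x) (f i y) < ε := by
  have hunif : ∀ᶠ p in uniformity X, ∀ i, p.1 ∈ K → dist (f i p.1) (f i p.2) < ε :=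
    Filter.eventually_all.2 fun i =>
      hK.uniformContinuousAt_of_continuousAt (f i) (hf i) (dist_mem_uniformity hε)
  obtain ⟨δ, hδ, hδK⟩ := mem_uniformity_dist.1 hunif
  exact ⟨δ, hδ, fun i x hx y hxy => hδK hxy i hx⟩

theorem Metric.hausdorffDist_iUnion_image_le {ι X Y : Type*}
    [PseudoMetricSpace X] [PseudoMetricSpace Y] {A B : Set X} {f : ι → X → Y} {δ ε : ℝ}
    (hε : 0 ≤ ε) (hAB : hausdorffDist A B < δ) (hfin : hausdorffEDist A B ≠ ⊤)
    (hf : ∀ i, ∀ b ∈ B, ∀ a, dist b a < δ → dist (f i b) (f i a) ≤ ε) :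
    hausdorffDist (⋃ i, f i '' A) (⋃ i, f i '' B) ≤ ε := by
  refine hausdorffDist_le_of_mem_dist hε ?_ ?_
  · intro x hx
    obtain ⟨i, a, ha, rfl⟩ := Set.mem_iUnion.1 hx
    obtain ⟨b, hb, hab⟩ := exists_dist_lt_of_hausdorffDist_lt ha hAB hfin
    refine ⟨f i b, Set.mem_iUnion.2 ⟨i, Set.mem_image_of_mem _ hb⟩, ?_⟩
    rw [dist_comm]
    exact hf i b hb a (by rwa [dist_comm])
  · intro x hx
    obtain ⟨i, b, hb, rfl⟩ := Set.mem_iUnion.1 hx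
    obtain ⟨a, ha, hab⟩ := exists_dist_lt_of_hausdorffDist_lt' hb hAB hfin
    exact ⟨f i a, Set.mem_iUnion.2 ⟨i, Set.mem_image_of_mem _ ha⟩,
      hf i b hb a (by rwa [dist_comm])⟩

theorem ifsMap_continuous_of_locally_compact_general
    {X : Type*} [MetricSpace X] {N : ℕ} [NeZero N]
    (f : Fin N → X → X) (hf : ∀ n, Continuous (f n)) :
    Continuous (ifsMap f hf) := by
  rw [Metric.continuous_iff]
  intro B ε hε
  obtain ⟨δ, hδ, hfδ⟩ := B.isCompact.exists_pos_forall_dist_lt_of_continuousAt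
    (fun n x _ => (hf n).continuousAt) (half_pos hε)
  refine ⟨δ, hδ, fun A hAB => ?_⟩
  calc dist (ifsMap f hf A) (ifsMap f hf B) ≤ ε / 2 :=
        hausdorffDist_iUnion_image_le (half_pos hε).le hAB (edist_ne_top A B)
          fun n b hb a hba => (hfδ n b hb a hba).le
    _ < ε := half_lt_self hε

/-- If `(X, d)` is a proper metric space (the closure of `C + r` is
compact for every compact `C` and `r > 0`) and `f₁, …, f_N : X → X` are continuous, then
the induced map `F : H(X) → H(X)`, `F(B) = f₁(B) ∪ ⋯ ∪ f_N(B)`, is continuous with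
respect to the Hausdorff metric. -/
theorem ifsMap_continuous_of_locally_compact
    {X : Type*} [MetricSpace X] {N : ℕ} [NeZero N]
    (hX : ∀ C : Set X, IsCompact C → ∀ r : ℝ, 0 < r → IsCompact (closure (plusSet C r)))
    (f : Fin N → X → X) (hf : ∀ n, Continuous (f n)) :
    Continuous (ifsMap f hf) :=
  ifsMap_continuous_of_locally_compact_general f hf
end

section
/- Let F = (X; f_1, …, f_N) be an IFS on a complete metric space with attractor A and basin of attraction U, and suppose the induced map F : H(U) → H(U) is continuous with respect to the Hausdorff metric. Then A = ⋂_{K≥1} closure( ⋃_{k≥K} F^k(B) ) for every set B ⊆ U whose closure is a nonempty compact subset of U. -/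
open Filter Metric

/-- The set map `B ↦ f₁(B) ∪ ⋯ ∪ f_N(B)` of an IFS. -/
def ifsSet {X : Type*} {N : ℕ} (f : Fin N → X → X) (B : Set X) : Set X :=
  ⋃ n, f n '' B

/-!
The iterates `Fᵏ(B̄)` converge to `A`, and continuity of the maps gives
`Fᵏ(B) ⊆ Fᵏ(B̄) ⊆ closure Fᵏ(B)`, so the iterates `Fᵏ(B)` converge to `A` as well. A closed
Hausdorff limit of a sequence of sets is its topological upper limit: each point of `A` is
approximated by points of every tail, and a point approximated by points of arbitrarily late
sets lies within any `ε` of `A`.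
-/

section HausdorffLimit

variable {X : Type*} [PseudoMetricSpace X] {S : ℕ → Set X} {A : Set X}

theorem subset_closure_iUnion_ge_of_tendsto_hausdorffDist
    (hfin : ∀ k, hausdorffEDist (S k) A ≠ ⊤)
    (hlim : Tendsto (fun k => hausdorffDist (S k) A) atTop (nhds 0)) (K : ℕ) :
    A ⊆ closure (⋃ (k : ℕ) (_ : K ≤ k), S k) := by
  intro a ha
  refine Metric.mem_closure_iff.2 fun ε hε => ?_
  obtain ⟨k, hk, hKk⟩ := ((hlim.eventually (gt_mem_nhds hε)).and (eventually_ge_atTop K)).exists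
  rw [hausdorffDist_comm] at hk
  obtain ⟨b, hb, hab⟩ :=
    exists_dist_lt_of_hausdorffDist_lt ha hk (by rw [hausdorffEDist_comm]; exact hfin k)
  exact ⟨b, Set.mem_iUnion₂.2 ⟨k, hKk, hb⟩, hab⟩

theorem mem_of_frequently_mem_closure_iUnion_ge (hA : IsClosed A)
    (hfin : ∀ k, hausdorffEDist (S k) A ≠ ⊤)
    (hlim : Tendsto (fun k => hausdorffDist (S k) A) atTop (nhds 0)) {x : X}
    (hx : ∃ᶠ K in atTop, x ∈ closure (⋃ (k : ℕ) (_ : K ≤ k), S k)) : x ∈ A := by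
  refine hA.closure_subset (Metric.mem_closure_iff.2 fun ε hε => ?_)
  obtain ⟨K₀, hK₀⟩ := eventually_atTop.1 (hlim.eventually (gt_mem_nhds (half_pos hε)))
  obtain ⟨K, hxK, hK₀K⟩ := (hx.and_eventually (eventually_ge_atTop K₀)).exists
  obtain ⟨y, hy, hxy⟩ := Metric.mem_closure_iff.1 hxK (ε / 2) (half_pos hε)
  obtain ⟨k, hKk, hyk⟩ := Set.mem_iUnion₂.1 hy
  obtain ⟨z, hz, hyz⟩ :=
    exists_dist_lt_of_hausdorffDist_lt hyk (hK₀ k (hK₀K.trans hKk)) (hfin k)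
  exact ⟨z, hz, by linarith [dist_triangle x y z]⟩

end HausdorffLimit

section IFS

variable {X : Type*} {N : ℕ} {f : Fin N → X → X}

theorem ifsSet_mono : Monotone (ifsSet f) :=
  fun _ _ h => Set.iUnion_mono fun _ => Set.image_mono h

theorem ifsSet_nonempty [Nonempty (Fin N)] {B : Set X} (hB : B.Nonempty) :
    (ifsSet f B).Nonempty :=
  let ⟨x, hx⟩ := hB
  ⟨f (Classical.arbitrary _) x, Set.mem_iUnion.2 ⟨_, x, hx, rfl⟩⟩

theorem iterate_ifsSet_nonempty [Nonempty (Fin N)] {B : Set X} (hB : B.Nonempty) (k : ℕ) :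
    ((ifsSet f)^[k] B).Nonempty :=
  Function.Iterate.rec Set.Nonempty hB (fun _ => ifsSet_nonempty) k

variable [TopologicalSpace X] (hf : ∀ n, Continuous (f n))
include hf

theorem isCompact_ifsSet {B : Set X} (hB : IsCompact B) : IsCompact (ifsSet f B) :=
  isCompact_iUnion fun n => hB.image (hf n)

theorem isCompact_iterate_ifsSet {B : Set X} (hB : IsCompact B) (k : ℕ) :
    IsCompact ((ifsSet f)^[k] B) :=
  Function.Iterate.rec IsCompact hB (fun _ => isCompact_ifsSet hf) k

theorem ifsSet_closure_subset (B : Set X) : ifsSet f (closure B) ⊆ closure (ifsSet f B) :=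
  Set.iUnion_subset fun n => (image_closure_subset_closure_image (hf n)).trans
    (closure_mono (Set.subset_iUnion (fun m => f m '' B) n))

theorem closure_iterate_ifsSet_closure (B : Set X) (k : ℕ) :
    closure ((ifsSet f)^[k] (closure B)) = closure ((ifsSet f)^[k] B) := by
  refine (closure_minimal ?_ isClosed_closure).antisymm
    (closure_mono (ifsSet_mono.iterate k subset_closure))
  induction k with
  | zero => exact subset_rfl
  | succ k ih =>
    simp only [Function.iterate_succ_apply']
    exact (ifsSet_mono ih).trans (ifsSet_closure_subset hf _)

end IFS

theorem attractor_eq_topological_upper_limit_general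
    {X : Type*} [MetricSpace X] {N : ℕ}
    (f : Fin N → X → X) (hf : ∀ n, Continuous (f n))
    (A U : Set X)
    (hAne : A.Nonempty) (hAcpt : IsCompact A)
    (hinv : ifsSet f A = A)
    (hattr : ∀ B : Set X, B ⊆ U → IsCompact B → B.Nonempty →
      Tendsto (fun k => hausdorffDist ((ifsSet f)^[k] B) A) atTop (nhds 0)) :
    ∀ B : Set X, B ⊆ U → closure B ⊆ U → IsCompact (closure B) → (closure B).Nonempty →
      A = ⋂ (K : ℕ) (_ : 1 ≤ K), closure (⋃ (k : ℕ) (_ : K ≤ k), (ifsSet f)^[k] B) := by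
  intro B _ hcBU hcpt hne
  have : Nonempty (Fin N) := by
    obtain ⟨x, hx⟩ := hinv ▸ hAne
    exact ⟨(Set.mem_iUnion.1 hx).choose⟩
  have hcl (k : ℕ) := closure_iterate_ifsSet_closure hf B k
  have hfin (k : ℕ) : hausdorffEDist ((ifsSet f)^[k] B) A ≠ ⊤ := by
    rw [← hausdorffEDist_closure_left, ← hcl, hausdorffEDist_closure_left]
    exact hausdorffEDist_ne_top_of_nonempty_of_bounded (iterate_ifsSet_nonempty hne k) hAne
      (isCompact_iterate_ifsSet hf hcpt k).isBounded hAcpt.isBounded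
  have hlim : Tendsto (fun k => hausdorffDist ((ifsSet f)^[k] B) A) atTop (nhds 0) := by
    refine (hattr _ hcBU hcpt hne).congr fun k => ?_
    rw [← hausdorffDist_closure₁, hcl, hausdorffDist_closure₁]
  refine (Set.subset_iInter₂ fun K _ =>
    subset_closure_iUnion_ge_of_tendsto_hausdorffDist hfin hlim K).antisymm fun x hx => ?_
  exact mem_of_frequently_mem_closure_iUnion_ge hAcpt.isClosed hfin hlim
    (eventually_atTop.2 ⟨1, fun K hK => Set.mem_iInter₂.1 hx K hK⟩).frequently

/-- Let `F = (X; f₁, …, f_N)` be an IFS on a complete metric space with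
attractor `A` and basin of attraction `U` (an open set containing `A`, invariant in the
sense that `F` maps nonempty compact subsets of `U` to subsets of `U`, on which all
nonempty compact sets are attracted to `A`, and maximal with that property).  If the
induced map `F : H(U) → H(U)` is continuous with respect to the Hausdorff metric, then
`A = ⋂_{K ≥ 1} closure (⋃_{k ≥ K} F^k(B))` for every `B ⊆ U` whose closure is a
nonempty compact subset of `U`. -/
theorem attractor_eq_topological_upper_limit
    {X : Type*} [MetricSpace X] [CompleteSpace X] {N : ℕ}
    (f : Fin N → X → X) (hf : ∀ n, Continuous (f n))
    (A U : Set X)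
    (hAne : A.Nonempty) (hAcpt : IsCompact A)
    (hUopen : IsOpen U) (hAU : A ⊆ U)
    (hinv : ifsSet f A = A)
    (hFU : ∀ B : Set X, B ⊆ U → IsCompact B → B.Nonempty → ifsSet f B ⊆ U)
    (hattr : ∀ B : Set X, B ⊆ U → IsCompact B → B.Nonempty →
      Tendsto (fun k => hausdorffDist ((ifsSet f)^[k] B) A) atTop (nhds 0))
    (hmax : ∀ V : Set X, IsOpen V → A ⊆ V →
      (∀ B : Set X, B ⊆ V → IsCompact B → B.Nonempty →
        Tendsto (fun k => hausdorffDist ((ifsSet f)^[k] B) A) atTop (nhds 0)) → V ⊆ U)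
    (hcont : ∀ B : Set X, B ⊆ U → IsCompact B → B.Nonempty → ∀ ε : ℝ, 0 < ε →
      ∃ δ : ℝ, 0 < δ ∧ ∀ C : Set X, C ⊆ U → IsCompact C → C.Nonempty →
        hausdorffDist B C < δ → hausdorffDist (ifsSet f B) (ifsSet f C) < ε) :
    ∀ B : Set X, B ⊆ U → closure B ⊆ U → IsCompact (closure B) → (closure B).Nonempty →
      A = ⋂ (K : ℕ) (_ : 1 ≤ K), closure (⋃ (k : ℕ) (_ : K ≤ k), (ifsSet f)^[k] B) :=
  attractor_eq_topological_upper_limit_general f hf A U hAne hAcpt hinv hattr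
end

section
/- The Read–Bajraktarević operator T : C* → C** defined by Tg = h + S·(g∘L − b∘L) is well defined (Tg is continuous and interpolates all the data points) and satisfies d_∞(Tg₁, Tg₂) ≤ s·d_∞(g₁, g₂) for all g₁, g₂ ∈ C*, where s = max{|S(x)| : x ∈ I}. In particular, if s < 1 then T has a unique fixed point f, and f ∈ C**, i.e., f interpolates the data. -/
/-!
Put `ψ = g - b`, which vanishes at `X 0` and `X N`. A continuous bijection of `I` onto
`[X (n-1), X n]` is strictly monotone, so it sends only the endpoints of `I` to the endpoints of
its image; hence `L` maps every knot `X j` to `X 0` or `X N`, and `ψ ∘ L` vanishes at all knots.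
On each piece `L` coincides with the (continuous) inverse of `l n`, so `ψ ∘ L` is continuous on
`I`, and its vanishing at the knots absorbs the jumps of the bounded factor `S`. The contraction
estimate is pointwise, and the fixed point comes from Banach's theorem on the closed subset `C*`
of `C(I, ℝ)`.
-/

open Set

/-- The Read–Bajraktarević operator `Tg = h + S · (g ∘ L − b ∘ L)`. -/
def RBop (S L b h : ℝ → ℝ) (g : ℝ → ℝ) : ℝ → ℝ :=
  fun x => h x + S x * (g (L x) - b (L x))

/-- The sup-distance `d_∞(g₁, g₂) = max {|g₁ x − g₂ x| : x ∈ [a, c]}`. -/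
noncomputable def dInf (a c : ℝ) (g₁ g₂ : ℝ → ℝ) : ℝ :=
  sSup ((fun x => |g₁ x - g₂ x|) '' Set.Icc a c)

open Filter Topology

def cStar (a c ya yc : ℝ) : Set (ℝ → ℝ) :=
  {g | ContinuousOn g (Icc a c) ∧ g a = ya ∧ g c = yc}

section SupDistance

variable {a c : ℝ} {f g : ℝ → ℝ}

theorem dInf_eq_dist {u v : C(Icc a c, ℝ)} (hu : ∀ x : Icc a c, u x = f x)
    (hv : ∀ x : Icc a c, v x = g x) : dInf a c f g = dist u v := by
  simp only [dInf, sSup_image', ContinuousMap.dist_eq_iSup, hu, hv, Real.dist_eq]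

theorem abs_sub_le_dInf (hf : ContinuousOn f (Icc a c)) (hg : ContinuousOn g (Icc a c))
    {x : ℝ} (hx : x ∈ Icc a c) : |f x - g x| ≤ dInf a c f g := by
  set u : C(Icc a c, ℝ) := ⟨_, hf.domRestrict⟩
  set v : C(Icc a c, ℝ) := ⟨_, hg.domRestrict⟩
  rw [dInf_eq_dist (u := u) (v := v) (fun _ => rfl) fun _ => rfl]
  exact ContinuousMap.dist_apply_le_dist (f := u) (g := v) ⟨x, hx⟩

theorem dInf_le (hac : a ≤ c) {C : ℝ} (h : ∀ x ∈ Icc a c, |f x - g x| ≤ C) :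
    dInf a c f g ≤ C :=
  csSup_le ((nonempty_Icc.2 hac).image _) (forall_mem_image.2 h)

theorem dInf_congr {f' g' : ℝ → ℝ} (hf : EqOn f f' (Icc a c)) (hg : EqOn g g' (Icc a c)) :
    dInf a c f g = dInf a c f' g' :=
  congrArg sSup (image_congr fun x hx => by rw [hf hx, hg hx])

theorem eqOn_of_dInf_le_mul (hf : ContinuousOn f (Icc a c)) (hg : ContinuousOn g (Icc a c))
    {K : ℝ} (hK : K < 1) (h : dInf a c f g ≤ K * dInf a c f g) : EqOn f g (Icc a c) := by
  set u : C(Icc a c, ℝ) := ⟨_, hf.domRestrict⟩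
  set v : C(Icc a c, ℝ) := ⟨_, hg.domRestrict⟩
  rw [dInf_eq_dist (u := u) (v := v) (fun _ => rfl) fun _ => rfl] at h
  have huv : u = v := dist_le_zero.1 (by nlinarith [dist_nonneg (x := u) (y := v)])
  exact fun x hx => congrArg (fun w : C(Icc a c, ℝ) => w ⟨x, hx⟩) huv

theorem exists_fixedPoint_of_dInf_le_mul {ya yc K : ℝ} (hac : a ≤ c) (hK0 : 0 ≤ K)
    (hK : K < 1) {T : (ℝ → ℝ) → ℝ → ℝ} {b : ℝ → ℝ} (hb : b ∈ cStar a c ya yc)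
    (hT : MapsTo T (cStar a c ya yc) (cStar a c ya yc))
    (hTK : ∀ g₁ ∈ cStar a c ya yc, ∀ g₂ ∈ cStar a c ya yc,
      dInf a c (T g₁) (T g₂) ≤ K * dInf a c g₁ g₂) :
    ∃ f ∈ cStar a c ya yc, EqOn (T f) f (Icc a c) := by
  let P : Set C(Icc a c, ℝ) :=
    {u | u ⟨a, left_mem_Icc.2 hac⟩ = ya ∧ u ⟨c, right_mem_Icc.2 hac⟩ = yc}
  have hP : IsClosed P :=
    (isClosed_eq (continuous_eval_const _) continuous_const).inter
      (isClosed_eq (continuous_eval_const _) continuous_const)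
  have : CompleteSpace P := hP.isComplete.completeSpace_coe
  have : Nonempty P := ⟨⟨⟨_, hb.1.domRestrict⟩, hb.2⟩⟩
  have hext : ∀ u : P, IccExtend hac u.1 ∈ cStar a c ya yc := fun u =>
    ⟨u.1.continuous.Icc_extend'.continuousOn, (IccExtend_left hac _).trans u.2.1,
      (IccExtend_right hac _).trans u.2.2⟩
  let Φ : P → P := fun u => ⟨⟨_, (hT (hext u)).1.domRestrict⟩, (hT (hext u)).2⟩
  have hΦ : ContractingWith ⟨K, hK0⟩ Φ := by
    refine ⟨hK, LipschitzWith.of_dist_le_mul fun u v => ?_⟩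
    rw [Subtype.dist_eq, Subtype.dist_eq, ← dInf_eq_dist (fun _ => rfl) fun _ => rfl,
      ← dInf_eq_dist (fun x => (IccExtend_val hac _ x).symm)
        fun x => (IccExtend_val hac _ x).symm]
    exact hTK _ (hext u) _ (hext v)
  set u₀ := ContractingWith.fixedPoint Φ hΦ
  refine ⟨IccExtend hac u₀.1, hext u₀, fun x hx => ?_⟩
  rw [IccExtend_of_mem hac _ hx]
  exact congrArg (fun u : P => u.1 ⟨x, hx⟩) hΦ.fixedPoint_isFixedPt

end SupDistance

theorem eq_left_or_eq_right_of_bijOn_Icc {a c p q y : ℝ} {f : ℝ → ℝ}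
    (hf : ContinuousOn f (Icc a c)) (hbij : BijOn f (Icc a c) (Icc p q)) (hy : y ∈ Icc a c)
    (hfy : f y = p ∨ f y = q) : y = a ∨ y = c := by
  by_contra! hne
  have hya : a < y := hy.1.lt_of_ne hne.1.symm
  have hyc : y < c := hy.2.lt_of_ne hne.2
  have ha := left_mem_Icc.2 (hya.trans hyc).le
  have hc := right_mem_Icc.2 (hya.trans hyc).le
  have hfy' : f y ∈ Ioo p q := by
    rcases hf.strictMonoOn_of_injOn_Icc' (hya.trans hyc).le hbij.injOn with hm | hm
    · exact ⟨(hbij.mapsTo ha).1.trans_lt (hm ha hy hya),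
        (hm hy hc hyc).trans_le (hbij.mapsTo hc).2⟩
    · exact ⟨(hbij.mapsTo hc).1.trans_lt (hm hy hc hyc),
        (hm ha hy hya).trans_le (hbij.mapsTo ha).2⟩
  rcases hfy with h | h <;> rw [h] at hfy'
  exacts [hfy'.1.false, hfy'.2.false]

theorem exists_continuousOn_rightInvOn_of_bijOn_Icc {a c p q : ℝ} (hpq : p ≤ q)
    {f : ℝ → ℝ} (hf : ContinuousOn f (Icc a c)) (hbij : BijOn f (Icc a c) (Icc p q)) :
    ∃ e : ℝ → ℝ, ContinuousOn e (Icc p q) ∧ MapsTo e (Icc p q) (Icc a c) ∧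
      RightInvOn e f (Icc p q) := by
  let E := Continuous.homeoOfEquivCompactToT2 (f := hbij.equiv f) (hf.mapsToRestrict hbij.mapsTo)
  refine ⟨fun x => E.symm (projIcc p q hpq x), ?_, fun x _ => (E.symm _).2, fun x hx => ?_⟩
  · exact (continuous_subtype_val.comp (E.symm.continuous.comp continuous_projIcc)).continuousOn
  · simp only [projIcc_of_mem hpq hx]
    exact congrArg Subtype.val (E.apply_symm_apply ⟨x, hx⟩)

/-- `L` need not invert `l` at `q`; there `ψ ∘ L` and `ψ ∘ l⁻¹` agree since both vanish. -/
theorem continuousOn_comp_of_rightInvOn_Ico {a c p q : ℝ} (hpq : p ≤ q) {l L ψ : ℝ → ℝ}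
    (hlc : ContinuousOn l (Icc a c)) (hl : BijOn l (Icc a c) (Icc p q))
    (hLI : MapsTo L (Ico p q) (Icc a c)) (hL : ∀ x ∈ Ico p q, l (L x) = x)
    (hψ : ContinuousOn ψ (Icc a c)) (hψa : ψ a = 0) (hψc : ψ c = 0) (hψq : ψ (L q) = 0) :
    ContinuousOn (fun x => ψ (L x)) (Icc p q) := by
  obtain ⟨e, hec, hemaps, heinv⟩ := exists_continuousOn_rightInvOn_of_bijOn_Icc hpq hlc hl
  refine (hψ.comp hec hemaps).congr fun x hx => ?_
  rcases hx.2.lt_or_eq with hxq | rfl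
  · exact congrArg ψ (hl.injOn (hLI ⟨hx.1, hxq⟩) (hemaps hx)
      ((hL x ⟨hx.1, hxq⟩).trans (heinv hx).symm))
  · rcases eq_left_or_eq_right_of_bijOn_Icc hlc hl (hemaps hx) (Or.inr (heinv hx)) with h | h
    · rw [hψq, Function.comp_apply, h, hψa]
    · rw [hψq, Function.comp_apply, h, hψc]

theorem continuousOn_Icc_of_forall_Icc_succ {α β : Type*} [LinearOrder α] [TopologicalSpace α]
    [OrderClosedTopology α] [TopologicalSpace β] {N : ℕ} {X : ℕ → α}
    (hX : MonotoneOn X (Iic N)) {f : α → β}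
    (hf : ∀ k < N, ContinuousOn f (Icc (X k) (X (k + 1)))) :
    ContinuousOn f (Icc (X 0) (X N)) := by
  induction N with
  | zero => simp [continuousOn_singleton]
  | succ n ih =>
    have hn : n ∈ Iic (n + 1) := mem_Iic.2 n.le_succ
    rw [← Icc_union_Icc_eq_Icc (hX (mem_Iic.2 n.succ.zero_le) hn n.zero_le)
      (hX hn (mem_Iic.2 le_rfl) n.le_succ)]
    exact (ih (hX.mono (Iic_subset_Iic.2 n.le_succ)) fun k hk => hf k (hk.trans n.lt_succ_self))
      |>.union_of_isClosed (hf n n.lt_succ_self) isClosed_Icc isClosed_Icc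

theorem continuousOn_mul_of_bounded {α : Type*} [TopologicalSpace α] {s : Set α}
    {S φ : α → ℝ} {M : ℝ} (hS : ∀ x ∈ s, |S x| ≤ M) (hφ : ContinuousOn φ s)
    (h : ∀ x ∈ s, ContinuousWithinAt S s x ∨ φ x = 0) :
    ContinuousOn (fun x => S x * φ x) s := by
  intro x hx
  rcases h x hx with hSx | hφx
  · exact hSx.mul (hφ x hx)
  · have hbdd : IsBoundedUnder (· ≤ ·) (𝓝[s] x) (norm ∘ S) :=
      ⟨M, eventually_map.2 (eventually_nhdsWithin_of_forall fun y hy => hS y hy)⟩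
    have hφ0 : Tendsto φ (𝓝[s] x) (𝓝 0) := hφx ▸ hφ x hx
    have := isBoundedUnder_le_mul_tendsto_zero hbdd hφ0
    simpa [ContinuousWithinAt, hφx] using this

theorem dInf_RBop_le {a c s : ℝ} (hac : a ≤ c) {S L b h g₁ g₂ : ℝ → ℝ}
    (hL : MapsTo L (Icc a c) (Icc a c)) (hS : ∀ x ∈ Icc a c, |S x| ≤ s)
    (hg₁ : ContinuousOn g₁ (Icc a c)) (hg₂ : ContinuousOn g₂ (Icc a c)) :
    dInf a c (RBop S L b h g₁) (RBop S L b h g₂) ≤ s * dInf a c g₁ g₂ := by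
  have hs : 0 ≤ s := (abs_nonneg _).trans (hS a (left_mem_Icc.2 hac))
  refine dInf_le hac fun x hx => ?_
  calc |RBop S L b h g₁ x - RBop S L b h g₂ x| = |S x| * |g₁ (L x) - g₂ (L x)| := by
        rw [← abs_mul]; congr 1; simp only [RBop]; ring
    _ ≤ s * dInf a c g₁ g₂ :=
        mul_le_mul (hS x hx) (abs_sub_le_dInf hg₁ hg₂ (hL hx)) (abs_nonneg _) hs

theorem continuousOn_RBop {s K : Set ℝ} (hK : K.Finite) {S L b h g : ℝ → ℝ} {M : ℝ}
    (hh : ContinuousOn h s) (hSM : ∀ x ∈ s, |S x| ≤ M) (hS : ContinuousOn S (s \ K))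
    (hψ : ContinuousOn (fun x => g (L x) - b (L x)) s)
    (hψK : ∀ x ∈ K, g (L x) - b (L x) = 0) :
    ContinuousOn (RBop S L b h g) s :=
  hh.add <| continuousOn_mul_of_bounded hSM hψ fun x hx => by
    by_cases hxK : x ∈ K
    · exact Or.inr (hψK x hxK)
    · exact Or.inl ((continuousWithinAt_inter (hK.isClosed.isOpen_compl.mem_nhds hxK)).1
        (hS x ⟨hx, hxK⟩))

section Knots

variable {N : ℕ} {X : ℕ → ℝ}

theorem monotoneOn_Iic_of_lt_add_one (hX : ∀ j < N, X j < X (j + 1)) : MonotoneOn X (Iic N) :=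
  (strictMonoOn_Iic_of_lt_succ fun m hm => by simpa using hX m hm).monotoneOn

theorem Icc_subset_Icc_of_lt_add_one (hX : ∀ j < N, X j < X (j + 1)) {i j : ℕ} (hij : i ≤ j)
    (hj : j ≤ N) : Icc (X i) (X j) ⊆ Icc (X 0) (X N) :=
  have hXm := monotoneOn_Iic_of_lt_add_one hX
  Icc_subset_Icc (hXm (mem_Iic.2 (Nat.zero_le N)) (mem_Iic.2 (hij.trans hj)) i.zero_le)
    (hXm (mem_Iic.2 hj) (mem_Iic.2 le_rfl) hj)

theorem map_knot_eq_left_or_eq_right (hX : ∀ j < N, X j < X (j + 1)) {l : ℕ → ℝ → ℝ}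
    (hl : ∀ n, 1 ≤ n → n ≤ N → ContinuousOn (l n) (Icc (X 0) (X N)) ∧
      BijOn (l n) (Icc (X 0) (X N)) (Icc (X (n - 1)) (X n)))
    {L : ℝ → ℝ} (hLI : MapsTo L (Icc (X 0) (X N)) (Icc (X 0) (X N)))
    (hL : ∀ n, 1 ≤ n → n ≤ N → ∀ x ∈ Ico (X (n - 1)) (X n), l n (L x) = x)
    (hLN : l N (L (X N)) = X N) {j : ℕ} (hj : j ≤ N) :
    L (X j) = X 0 ∨ L (X j) = X N := by
  have hXj : X j ∈ Icc (X 0) (X N) :=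
    Icc_subset_Icc_of_lt_add_one hX le_rfl hj (left_mem_Icc.2 le_rfl)
  rcases hj.lt_or_eq with hjN | rfl
  · obtain ⟨hlc, hbij⟩ := hl (j + 1) (by omega) hjN
    refine eq_left_or_eq_right_of_bijOn_Icc hlc hbij (hLI hXj) (Or.inl ?_)
    simpa using hL (j + 1) (by omega) hjN (X j) (by simpa using hX j hjN)
  · rcases Nat.eq_zero_or_pos j with rfl | hj0
    · exact Or.inl (le_antisymm (hLI hXj).2 (hLI hXj).1)
    · obtain ⟨hlc, hbij⟩ := hl j hj0 le_rfl
      exact eq_left_or_eq_right_of_bijOn_Icc hlc hbij (hLI hXj) (Or.inr hLN)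

theorem continuousOn_comp_of_piecewise_rightInvOn (hX : ∀ j < N, X j < X (j + 1))
    {l : ℕ → ℝ → ℝ}
    (hl : ∀ n, 1 ≤ n → n ≤ N → ContinuousOn (l n) (Icc (X 0) (X N)) ∧
      BijOn (l n) (Icc (X 0) (X N)) (Icc (X (n - 1)) (X n)))
    {L : ℝ → ℝ} (hLI : MapsTo L (Icc (X 0) (X N)) (Icc (X 0) (X N)))
    (hL : ∀ n, 1 ≤ n → n ≤ N → ∀ x ∈ Ico (X (n - 1)) (X n), l n (L x) = x)
    {ψ : ℝ → ℝ} (hψ : ContinuousOn ψ (Icc (X 0) (X N))) (hψ0 : ψ (X 0) = 0)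
    (hψN : ψ (X N) = 0) (hψL : ∀ j ≤ N, ψ (L (X j)) = 0) :
    ContinuousOn (fun x => ψ (L x)) (Icc (X 0) (X N)) := by
  refine continuousOn_Icc_of_forall_Icc_succ (monotoneOn_Iic_of_lt_add_one hX) fun k hk => ?_
  obtain ⟨hlc, hbij⟩ := hl (k + 1) (by omega) hk
  rw [Nat.add_sub_cancel] at hbij
  refine continuousOn_comp_of_rightInvOn_Ico (hX k hk).le hlc hbij
    (fun x hx => hLI (Icc_subset_Icc_of_lt_add_one hX k.le_succ hk (Ico_subset_Icc_self hx)))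
    (fun x hx => hL (k + 1) (by omega) hk x (by rwa [Nat.add_sub_cancel])) hψ hψ0 hψN
    (hψL (k + 1) hk)

end Knots

theorem read_bajraktarevic_operator_general
    (N : ℕ) (X Y : ℕ → ℝ)
    (hX : ∀ j, j < N → X j < X (j + 1))
    -- the maps `l n : I → [X (n-1), X n]` are continuous bijections
    (l : ℕ → ℝ → ℝ)
    (hl : ∀ n, 1 ≤ n → n ≤ N → ContinuousOn (l n) (Icc (X 0) (X N)) ∧
      Set.BijOn (l n) (Icc (X 0) (X N)) (Icc (X (n - 1)) (X n)))
    -- `L = l_n⁻¹` on `[X (n-1), X n)`, with `L (X N) = l_N⁻¹ (X N)`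
    (L : ℝ → ℝ)
    (hLI : Set.MapsTo L (Icc (X 0) (X N)) (Icc (X 0) (X N)))
    (hL : ∀ n, 1 ≤ n → n ≤ N → ∀ x ∈ Ico (X (n - 1)) (X n), l n (L x) = x)
    (hLN : l N (L (X N)) = X N)
    -- `S` is bounded, with `s = max {|S x| : x ∈ I}`, and piecewise continuous with
    -- the only possible discontinuities at the interior knots
    (S : ℝ → ℝ) (s : ℝ)
    (hS : IsGreatest ((fun x => |S x|) '' Icc (X 0) (X N)) s)
    (hScont : ContinuousOn S (Icc (X 0) (X N) \ (X '' {j | 1 ≤ j ∧ j < N})))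
    -- `b ∈ C*` and `h ∈ C**`
    (b h : ℝ → ℝ)
    (hbC : ContinuousOn b (Icc (X 0) (X N)))
    (hb0 : b (X 0) = Y 0) (hbN : b (X N) = Y N)
    (hhC : ContinuousOn h (Icc (X 0) (X N)))
    (hh : ∀ j ≤ N, h (X j) = Y j) :
    -- `T` is well defined: `Tg ∈ C**` for every `g ∈ C*`
    (∀ g : ℝ → ℝ, ContinuousOn g (Icc (X 0) (X N)) → g (X 0) = Y 0 → g (X N) = Y N →
      ContinuousOn (RBop S L b h g) (Icc (X 0) (X N)) ∧
        ∀ j ≤ N, RBop S L b h g (X j) = Y j) ∧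
    -- `T` contracts `d_∞` by the factor `s`
    (∀ g₁ g₂ : ℝ → ℝ,
      ContinuousOn g₁ (Icc (X 0) (X N)) → g₁ (X 0) = Y 0 → g₁ (X N) = Y N →
      ContinuousOn g₂ (Icc (X 0) (X N)) → g₂ (X 0) = Y 0 → g₂ (X N) = Y N →
      dInf (X 0) (X N) (RBop S L b h g₁) (RBop S L b h g₂) ≤ s * dInf (X 0) (X N) g₁ g₂) ∧
    -- if `s < 1`, `T` has a unique fixed point in `C*`, which lies in `C**`
    (s < 1 → ∃ f : ℝ → ℝ,
      (ContinuousOn f (Icc (X 0) (X N)) ∧ (∀ j ≤ N, f (X j) = Y j) ∧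
        ∀ x ∈ Icc (X 0) (X N), RBop S L b h f x = f x) ∧
      ∀ g : ℝ → ℝ, ContinuousOn g (Icc (X 0) (X N)) → g (X 0) = Y 0 → g (X N) = Y N →
        (∀ x ∈ Icc (X 0) (X N), RBop S L b h g x = g x) →
        Set.EqOn g f (Icc (X 0) (X N))) := by
  have hXI : ∀ j ≤ N, X j ∈ Icc (X 0) (X N) := fun j hj =>
    Icc_subset_Icc_of_lt_add_one hX le_rfl hj (left_mem_Icc.2 le_rfl)
  have hac : X 0 ≤ X N := (hXI N le_rfl).1
  have hSs : ∀ x ∈ Icc (X 0) (X N), |S x| ≤ s := fun x hx => hS.2 ⟨x, hx, rfl⟩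
  have hvanish : ∀ g ∈ cStar (X 0) (X N) (Y 0) (Y N), ∀ j ≤ N,
      g (L (X j)) - b (L (X j)) = 0 := by
    rintro g ⟨-, hg0, hgN⟩ j hj
    rcases map_knot_eq_left_or_eq_right hX hl hLI hL hLN hj with hj' | hj' <;>
      simp [hj', hg0, hgN, hb0, hbN]
  have hT : ∀ g ∈ cStar (X 0) (X N) (Y 0) (Y N), ContinuousOn (RBop S L b h g) (Icc (X 0) (X N))
      ∧ ∀ j ≤ N, RBop S L b h g (X j) = Y j := fun g hg =>
    ⟨continuousOn_RBop (((finite_lt_nat N).subset fun _ hj => hj.2).image X) hhC hSs hScont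
      (continuousOn_comp_of_piecewise_rightInvOn hX hl hLI hL (hg.1.sub hbC) (by simp [hg.2.1, hb0])
        (by simp [hg.2.2, hbN]) (hvanish g hg))
      (by rintro _ ⟨j, hj, rfl⟩; exact hvanish g hg j hj.2.le),
    fun j hj => by simp only [RBop, hvanish g hg j hj, mul_zero, add_zero, hh j hj]⟩
  have hcontr : ∀ g₁ g₂, ContinuousOn g₁ (Icc (X 0) (X N)) →
      ContinuousOn g₂ (Icc (X 0) (X N)) →
      dInf (X 0) (X N) (RBop S L b h g₁) (RBop S L b h g₂) ≤ s * dInf (X 0) (X N) g₁ g₂ :=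
    fun _ _ => dInf_RBop_le hac hLI hSs
  refine ⟨fun g hgC hg0 hgN => hT g ⟨hgC, hg0, hgN⟩,
    fun g₁ g₂ h₁ _ _ h₂ _ _ => hcontr g₁ g₂ h₁ h₂, fun hs1 => ?_⟩
  obtain ⟨f, hf, hfix⟩ := exists_fixedPoint_of_dInf_le_mul hac
    ((abs_nonneg _).trans (hSs _ (hXI 0 N.zero_le))) hs1 ⟨hbC, hb0, hbN⟩
    (fun g hg => ⟨(hT g hg).1, (hT g hg).2 0 N.zero_le, (hT g hg).2 N le_rfl⟩)
    fun g₁ hg₁ g₂ hg₂ => hcontr g₁ g₂ hg₁.1 hg₂.1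
  refine ⟨f, ⟨hf.1, fun j hj => (hfix (hXI j hj)).symm.trans ((hT f hf).2 j hj), hfix⟩,
    fun g hgC _ _ hgfix => eqOn_of_dInf_le_mul hgC hf.1 hs1 ?_⟩
  exact (dInf_congr hgfix hfix).symm.trans_le (hcontr g f hgC hf.1)

/-- The Read–Bajraktarević operator `T : C* → C**`,
`Tg = h + S·(g∘L − b∘L)`, is well defined (`Tg` is continuous and interpolates all the
data points) and satisfies `d_∞(Tg₁, Tg₂) ≤ s·d_∞(g₁, g₂)` for all `g₁, g₂ ∈ C*`, where
`s = max {|S(x)| : x ∈ I}`.  In particular, if `s < 1` then `T` has a unique fixed point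
`f`, and `f ∈ C**`, i.e. `f` interpolates the data. -/
theorem read_bajraktarevic_operator
    (N : ℕ) (hN : 0 < N) (X Y : ℕ → ℝ)
    (hX : ∀ j, j < N → X j < X (j + 1))
    -- the maps `l n : I → [X (n-1), X n]` are continuous bijections
    (l : ℕ → ℝ → ℝ)
    (hl : ∀ n, 1 ≤ n → n ≤ N → ContinuousOn (l n) (Icc (X 0) (X N)) ∧
      Set.BijOn (l n) (Icc (X 0) (X N)) (Icc (X (n - 1)) (X n)))
    -- `L = l_n⁻¹` on `[X (n-1), X n)`, with `L (X N) = l_N⁻¹ (X N)`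
    (L : ℝ → ℝ)
    (hLI : Set.MapsTo L (Icc (X 0) (X N)) (Icc (X 0) (X N)))
    (hL : ∀ n, 1 ≤ n → n ≤ N → ∀ x ∈ Ico (X (n - 1)) (X n), l n (L x) = x)
    (hLN : l N (L (X N)) = X N)
    -- `S` is bounded, with `s = max {|S x| : x ∈ I}`, and piecewise continuous with
    -- the only possible discontinuities at the interior knots
    (S : ℝ → ℝ) (s : ℝ)
    (hS : IsGreatest ((fun x => |S x|) '' Icc (X 0) (X N)) s)
    (hScont : ContinuousOn S (Icc (X 0) (X N) \ (X '' {j | 1 ≤ j ∧ j < N})))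
    -- `b ∈ C*` and `h ∈ C**`
    (b h : ℝ → ℝ)
    (hbC : ContinuousOn b (Icc (X 0) (X N)))
    (hb0 : b (X 0) = Y 0) (hbN : b (X N) = Y N)
    (hhC : ContinuousOn h (Icc (X 0) (X N)))
    (hh : ∀ j ≤ N, h (X j) = Y j) :
    -- `T` is well defined: `Tg ∈ C**` for every `g ∈ C*`
    (∀ g : ℝ → ℝ, ContinuousOn g (Icc (X 0) (X N)) → g (X 0) = Y 0 → g (X N) = Y N →
      ContinuousOn (RBop S L b h g) (Icc (X 0) (X N)) ∧
        ∀ j ≤ N, RBop S L b h g (X j) = Y j) ∧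
    -- `T` contracts `d_∞` by the factor `s`
    (∀ g₁ g₂ : ℝ → ℝ,
      ContinuousOn g₁ (Icc (X 0) (X N)) → g₁ (X 0) = Y 0 → g₁ (X N) = Y N →
      ContinuousOn g₂ (Icc (X 0) (X N)) → g₂ (X 0) = Y 0 → g₂ (X N) = Y N →
      dInf (X 0) (X N) (RBop S L b h g₁) (RBop S L b h g₂) ≤ s * dInf (X 0) (X N) g₁ g₂) ∧
    -- if `s < 1`, `T` has a unique fixed point in `C*`, which lies in `C**`
    (s < 1 → ∃ f : ℝ → ℝ,
      (ContinuousOn f (Icc (X 0) (X N)) ∧ (∀ j ≤ N, f (X j) = Y j) ∧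
        ∀ x ∈ Icc (X 0) (X N), RBop S L b h f x = f x) ∧
      ∀ g : ℝ → ℝ, ContinuousOn g (Icc (X 0) (X N)) → g (X 0) = Y 0 → g (X N) = Y N →
        (∀ x ∈ Icc (X 0) (X N), RBop S L b h g x = g x) →
        Set.EqOn g f (Icc (X 0) (X N))) :=
  read_bajraktarevic_operator_general N X Y hX l hl L hLI hL hLN S s hS hScont b h hbC hb0 hbN hhC
    hh
end

section
/- Suppose s < 1 and let f ∈ C** be the unique fixed point of the Read–Bajraktarević operator T. Assume each l_n is Lipschitz with constant λ_l < 1 and S : I → [−s, s] is Lipschitz with constant λ_S > 0. Fix η > 0 and let X_η = {(x, y) : x ∈ I, |y − f(x)| ≤ η}, and define w_n(x, y) = (l_n(x), h(l_n(x)) + S(l_n(x))(y − b(x))). Then for α = 1 and any β with 0 < β < (1 − λ_l)/(λ_l λ_S η), each w_n is a contraction on X_η with respect to the metric d_f: d_f(w_n(x₁, y₁), w_n(x₂, y₂)) ≤ c · d_f((x₁, y₁), (x₂, y₂)) for all (x₁, y₁), (x₂, y₂) ∈ X_η, where c = max{s, λ_l + β λ_l λ_S η} < 1. -/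
open Set

/-- The maps `w_n(x, y) = (lₙ(x), h(lₙ(x)) + S(lₙ(x))(y − b(x)))` of the IFS `W`. -/
def ifsW (S b h : ℝ → ℝ) (l : ℕ → ℝ → ℝ) (n : ℕ) (p : ℝ × ℝ) : ℝ × ℝ :=
  (l n p.1, h (l n p.1) + S (l n p.1) * (p.2 - b p.1))

/-- The metric `d_f` with `α = 1`:
`d_f((x₁,y₁),(x₂,y₂)) = |x₁ − x₂| + β|(y₁ − f x₁) − (y₂ − f x₂)|`. -/
def taxiDistF (β : ℝ) (f : ℝ → ℝ) (p₁ p₂ : ℝ × ℝ) : ℝ :=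
  |p₁.1 - p₂.1| + β * |(p₁.2 - f p₁.1) - (p₂.2 - f p₂.1)|

/-- Suppose `s < 1` and let `f ∈ C**` be the unique fixed point of the
Read–Bajraktarević operator `T`.  Assume each `lₙ` is Lipschitz with constant `λ_l < 1`
and `S : I → [−s, s]` is Lipschitz with constant `λ_S > 0`.  Fix `η > 0`, let
`X_η = {(x,y) : x ∈ I, |y − f(x)| ≤ η}`, and define
`wₙ(x,y) = (lₙ(x), h(lₙ(x)) + S(lₙ(x))(y − b(x)))`.  Then for `α = 1` and any
`0 < β < (1 − λ_l)/(λ_l λ_S η)`, each `wₙ` is a contraction on `X_η` with respect to the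
metric `d_f`, with contraction factor `c = max {s, λ_l + β λ_l λ_S η} < 1`. -/
theorem bilinear_ifs_maps_contractive
    (N : ℕ) (hN : 0 < N) (X Y : ℕ → ℝ)
    (hX : ∀ j, j < N → X j < X (j + 1))
    (l : ℕ → ℝ → ℝ)
    (hl : ∀ n, 1 ≤ n → n ≤ N → ContinuousOn (l n) (Icc (X 0) (X N)) ∧
      Set.BijOn (l n) (Icc (X 0) (X N)) (Icc (X (n - 1)) (X n)))
    (L : ℝ → ℝ)
    (hLI : Set.MapsTo L (Icc (X 0) (X N)) (Icc (X 0) (X N)))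
    (hL : ∀ n, 1 ≤ n → n ≤ N → ∀ x ∈ Ico (X (n - 1)) (X n), l n (L x) = x)
    (hLN : l N (L (X N)) = X N)
    (S : ℝ → ℝ) (s : ℝ) (hs : s < 1)
    (hSb : ∀ x ∈ Icc (X 0) (X N), |S x| ≤ s)
    (b h : ℝ → ℝ)
    (hbC : ContinuousOn b (Icc (X 0) (X N)))
    (hb0 : b (X 0) = Y 0) (hbN : b (X N) = Y N)
    (hhC : ContinuousOn h (Icc (X 0) (X N)))
    (hh : ∀ j ≤ N, h (X j) = Y j)
    -- `f ∈ C**` is the fixed point of `T`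
    (f : ℝ → ℝ)
    (hfC : ContinuousOn f (Icc (X 0) (X N)))
    (hfi : ∀ j ≤ N, f (X j) = Y j)
    (hfix : ∀ x ∈ Icc (X 0) (X N), RBop S L b h f x = f x)
    -- Lipschitz constants
    (lamL : ℝ) (hlamL1 : lamL < 1)
    (hlipL : ∀ n, 1 ≤ n → n ≤ N → ∀ x₁ ∈ Icc (X 0) (X N), ∀ x₂ ∈ Icc (X 0) (X N),
      |l n x₁ - l n x₂| ≤ lamL * |x₁ - x₂|)
    (lamS : ℝ) (hlamS0 : 0 < lamS)
    (hlipS : ∀ x₁ ∈ Icc (X 0) (X N), ∀ x₂ ∈ Icc (X 0) (X N),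
      |S x₁ - S x₂| ≤ lamS * |x₁ - x₂|)
    (η : ℝ) (hη : 0 < η)
    (β : ℝ) (hβ0 : 0 < β) (hβ : β < (1 - lamL) / (lamL * lamS * η)) :
    max s (lamL + β * lamL * lamS * η) < 1 ∧
    ∀ n, 1 ≤ n → n ≤ N → ∀ p₁ p₂ : ℝ × ℝ,
      p₁.1 ∈ Icc (X 0) (X N) → |p₁.2 - f p₁.1| ≤ η →
      p₂.1 ∈ Icc (X 0) (X N) → |p₂.2 - f p₂.1| ≤ η →
      taxiDistF β f (ifsW S b h l n p₁) (ifsW S b h l n p₂) ≤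
        max s (lamL + β * lamL * lamS * η) * taxiDistF β f p₁ p₂ :=  by
  -- monotonicity of the knots
  have Xmono : ∀ i j : ℕ, i ≤ j → j ≤ N → X i ≤ X j := by
    intro i j hij hjN
    induction j with
    | zero =>
      have : i = 0 := Nat.le_zero.mp hij
      simp [this]
    | succ k ih =>
      rcases Nat.lt_or_ge i (k + 1) with hik | hik
      · exact le_trans (ih (Nat.lt_succ_iff.mp hik) (by omega)) (hX k (by omega)).le
      · have : i = k + 1 := by omega
        simp [this]
  have hX0N : X 0 ≤ X N := Xmono 0 N (Nat.zero_le _) le_rfl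
  have hIsub : ∀ n, 1 ≤ n → n ≤ N → Icc (X (n - 1)) (X n) ⊆ Icc (X 0) (X N) :=
    fun n hn1 hnN => Icc_subset_Icc (Xmono 0 (n - 1) (Nat.zero_le _) (by omega))
      (Xmono n N hnN le_rfl)
  have s0 : 0 ≤ s := le_trans (abs_nonneg _) (hSb (X 0) ⟨le_rfl, hX0N⟩)
  have hpos : 0 < lamL * lamS * η := by
    by_contra hle
    push_neg at hle
    have h1 : (0 : ℝ) ≤ 1 - lamL := by linarith
    have : (1 - lamL) / (lamL * lamS * η) ≤ 0 := div_nonpos_of_nonneg_of_nonpos h1 hle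
    linarith
  have lamL0 : 0 < lamL := by
    by_contra hle
    push_neg at hle
    nlinarith [mul_pos hlamS0 hη]
  have hc2 : lamL + β * lamL * lamS * η < 1 := by
    have := (lt_div_iff₀ hpos).mp hβ
    nlinarith
  -- the key self-affinity identity
  have key : ∀ n, 1 ≤ n → n ≤ N → ∀ x ∈ Icc (X 0) (X N),
      f (l n x) - h (l n x) = S (l n x) * (f x - b x) := by
    intro n hn1 hnN x hx
    obtain ⟨hlc, hlb⟩ := hl n hn1 hnN
    have hmem : l n x ∈ Icc (X (n - 1)) (X n) := hlb.mapsTo hx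
    have hmemI : l n x ∈ Icc (X 0) (X N) := hIsub n hn1 hnN hmem
    rcases lt_or_eq_of_le hmem.2 with hlt | heq
    · have h1 : l n (L (l n x)) = l n x := hL n hn1 hnN _ ⟨hmem.1, hlt⟩
      have hL1 : L (l n x) ∈ Icc (X 0) (X N) := hLI hmemI
      have hxeq : L (l n x) = x := hlb.injOn hL1 hx h1
      have hfx := hfix (l n x) hmemI
      simp only [RBop] at hfx
      rw [hxeq] at hfx
      linarith
    · rcases eq_or_lt_of_le hnN with hnN' | hnlt
      · subst hnN'
        have hXNmem : X n ∈ Icc (X 0) (X n) := ⟨hX0N, le_rfl⟩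
        have hL1 : L (X n) ∈ Icc (X 0) (X n) := hLI hXNmem
        have hxeq : L (X n) = x := hlb.injOn hL1 hx (hLN.trans heq.symm)
        have hfx := hfix (l n x) hmemI
        simp only [RBop] at hfx
        rw [heq] at hfx ⊢
        rw [hxeq] at hfx
        linarith
      · have hend : x = X 0 ∨ x = X N := by
          by_contra hcon
          push_neg at hcon
          rcases hlc.strictMonoOn_of_injOn_Icc' hX0N hlb.injOn with hm | ha
          · have hxlt : x < X N := lt_of_le_of_ne hx.2 hcon.2
            have h2 := hm hx ⟨hX0N, le_rfl⟩ hxlt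
            have h3 : l n (X N) ≤ X n := (hlb.mapsTo ⟨hX0N, le_rfl⟩).2
            rw [heq] at h2
            linarith
          · have hxgt : X 0 < x := lt_of_le_of_ne hx.1 (Ne.symm hcon.1)
            have h2 := ha ⟨le_rfl, hX0N⟩ hx hxgt
            have h3 : l n (X 0) ≤ X n := (hlb.mapsTo ⟨le_rfl, hX0N⟩).2
            rw [heq] at h2
            linarith
        have hfb : f x = b x := by
          rcases hend with h0 | hN'
          · rw [h0, hfi 0 (Nat.zero_le _), hb0]
          · rw [hN', hfi N le_rfl, hbN]
        have hfh : f (X n) = h (X n) := by rw [hfi n hnN, hh n hnN]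
        rw [heq, hfh, hfb]
        ring
  set c : ℝ := max s (lamL + β * lamL * lamS * η) with hc
  have hclt : c < 1 := max_lt hs hc2
  refine ⟨hclt, ?_⟩
  intro n hn1 hnN p₁ p₂ h1I h1η h2I h2η
  have k1 := key n hn1 hnN p₁.1 h1I
  have k2 := key n hn1 hnN p₂.1 h2I
  have hu1 : l n p₁.1 ∈ Icc (X 0) (X N) := hIsub n hn1 hnN ((hl n hn1 hnN).2.mapsTo h1I)
  have hu2 : l n p₂.1 ∈ Icc (X 0) (X N) := hIsub n hn1 hnN ((hl n hn1 hnN).2.mapsTo h2I)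
  have hlip := hlipL n hn1 hnN p₁.1 h1I p₂.1 h2I
  have hSlip := hlipS (l n p₁.1) hu1 (l n p₂.1) hu2
  simp only [ifsW, taxiDistF]
  have e1 : h (l n p₁.1) + S (l n p₁.1) * (p₁.2 - b p₁.1) - f (l n p₁.1)
      = S (l n p₁.1) * (p₁.2 - f p₁.1) := by linear_combination -k1
  have e2 : h (l n p₂.1) + S (l n p₂.1) * (p₂.2 - b p₂.1) - f (l n p₂.1)
      = S (l n p₂.1) * (p₂.2 - f p₂.1) := by linear_combination -k2
  rw [e1, e2]
  set A : ℝ := |p₁.1 - p₂.1| with hA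
  set B : ℝ := |(p₁.2 - f p₁.1) - (p₂.2 - f p₂.1)| with hB
  have hA0 : 0 ≤ A := abs_nonneg _
  have hB0 : 0 ≤ B := abs_nonneg _
  have hsec : |S (l n p₁.1) * (p₁.2 - f p₁.1) - S (l n p₂.1) * (p₂.2 - f p₂.1)|
      ≤ s * B + lamS * lamL * A * η := by
    have hrw : S (l n p₁.1) * (p₁.2 - f p₁.1) - S (l n p₂.1) * (p₂.2 - f p₂.1)
        = S (l n p₁.1) * ((p₁.2 - f p₁.1) - (p₂.2 - f p₂.1))
          + (S (l n p₁.1) - S (l n p₂.1)) * (p₂.2 - f p₂.1) := by ring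
    rw [hrw]
    calc |S (l n p₁.1) * ((p₁.2 - f p₁.1) - (p₂.2 - f p₂.1))
          + (S (l n p₁.1) - S (l n p₂.1)) * (p₂.2 - f p₂.1)|
        ≤ |S (l n p₁.1) * ((p₁.2 - f p₁.1) - (p₂.2 - f p₂.1))|
          + |(S (l n p₁.1) - S (l n p₂.1)) * (p₂.2 - f p₂.1)| := abs_add_le _ _
      _ = |S (l n p₁.1)| * B + |S (l n p₁.1) - S (l n p₂.1)| * |p₂.2 - f p₂.1| := by
          rw [abs_mul, abs_mul]
      _ ≤ s * B + (lamS * (lamL * A)) * η := by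
          refine add_le_add (mul_le_mul_of_nonneg_right (hSb _ hu1) hB0) ?_
          refine mul_le_mul ?_ h2η (abs_nonneg _) (by positivity)
          exact le_trans hSlip (mul_le_mul_of_nonneg_left hlip hlamS0.le)
      _ = s * B + lamS * lamL * A * η := by ring
  calc |l n p₁.1 - l n p₂.1|
        + β * |S (l n p₁.1) * (p₁.2 - f p₁.1) - S (l n p₂.1) * (p₂.2 - f p₂.1)|
      ≤ lamL * A + β * (s * B + lamS * lamL * A * η) :=
        add_le_add hlip (mul_le_mul_of_nonneg_left hsec hβ0.le)
    _ = (lamL + β * lamL * lamS * η) * A + s * (β * B) := by ring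
    _ ≤ c * A + c * (β * B) :=
        add_le_add (mul_le_mul_of_nonneg_right (le_max_right _ _) hA0)
          (mul_le_mul_of_nonneg_right (le_max_left _ _) (mul_nonneg hβ0.le hB0))
    _ = c * (A + β * B) := by ring
end

section
/- Suppose s < 1, let f ∈ C** be the unique fixed point of the Read–Bajraktarević operator T, assume each l_n is Lipschitz with constant λ_l < 1 and S : I → [−s, s] is Lipschitz. Then the IFS W = (I × ℝ; w_1, …, w_N), where w_n(x, y) = (l_n(x), h(l_n(x)) + S(l_n(x))(y − b(x))), has a unique attractor, namely the graph Γ(f) = {(x, f(x)) : x ∈ I} of f, and the basin of attraction is all of I × ℝ: W(Γ(f)) = Γ(f) and W^k(B) → Γ(f) in the Hausdorff metric for every nonempty compact B ⊆ I × ℝ. -/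
/-!
Since `f` is the fixed point of `T`, each `w_n` carries the point `(x, f x)` of the graph to
`(lₙ x, f (lₙ x))`, and the pieces `lₙ(I)` cover `I`; hence `W(Γ(f)) = Γ(f)`. More precisely
`w_n(x, y)` lies `S(lₙ x) · (y − f x)` above `Γ(f)`, so the vertical distance of `W^k(B)` to the
graph is at most `s^k` times that of `B`, while its horizontal projection is `λ_l^k |I|`-dense
in `I`. Uniform continuity of `f` turns these two bounds into Hausdorff convergence, and a
compact invariant set is at Hausdorff distance `0` from `Γ(f)`, hence equal to it.
-/

open Set Filter Metric

/-- The set map `B ↦ ⋃_{n=1}^N w_n(B)` of the IFS `W`. -/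
def ifsWSet (S b h : ℝ → ℝ) (l : ℕ → ℝ → ℝ) (N : ℕ) (B : Set (ℝ × ℝ)) : Set (ℝ × ℝ) :=
  ⋃ n ∈ Finset.Icc 1 N, (ifsW S b h l n) '' B

open Topology

theorem ContinuousOn.eq_or_eq_of_apply_eq_or_eq {α δ : Type*} [ConditionallyCompleteLinearOrder α]
    [DenselyOrdered α] [TopologicalSpace α] [OrderTopology α] [LinearOrder δ]
    [TopologicalSpace δ] [OrderClosedTopology δ] {g : α → δ} {a b x : α} {c d : δ}
    (hg : ContinuousOn g (Icc a b)) (hinj : InjOn g (Icc a b))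
    (hmaps : MapsTo g (Icc a b) (Icc c d)) (hx : x ∈ Icc a b) (hgx : g x = c ∨ g x = d) :
    x = a ∨ x = b := by
  by_contra! hne
  have hxab : x ∈ Ioo a b := ⟨lt_of_le_of_ne hx.1 hne.1.symm, lt_of_le_of_ne hx.2 hne.2⟩
  have ha : a ∈ Icc a b := left_mem_Icc.2 (hx.1.trans hx.2)
  have hb : b ∈ Icc a b := right_mem_Icc.2 (hx.1.trans hx.2)
  have hgx' : g x ∈ Ioo c d := by
    rcases hg.strictMonoOn_of_injOn_Icc' (hx.1.trans hx.2) hinj with hmono | hanti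
    · exact ⟨(hmaps ha).1.trans_lt (hmono ha hx hxab.1), (hmono hx hb hxab.2).trans_le (hmaps hb).2⟩
    · exact ⟨(hmaps hb).1.trans_lt (hanti hx hb hxab.2), (hanti ha hx hxab.1).trans_le (hmaps ha).2⟩
  rcases hgx with h | h <;> simp [h] at hgx'

theorem tendsto_hausdorffDist_graph {α β : Type*} [PseudoMetricSpace α] [PseudoMetricSpace β]
    {K : Set α} (hK : IsCompact K) {f : α → β} (hf : ContinuousOn f K) {B : ℕ → Set (α × β)}
    {u v : ℕ → ℝ} (hu : Tendsto u atTop (𝓝 0)) (hv : Tendsto v atTop (𝓝 0))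
    (hBK : ∀ k, B k ⊆ K ×ˢ univ) (hvert : ∀ k, ∀ p ∈ B k, dist p.2 (f p.1) ≤ u k)
    (hhor : ∀ k, ∀ x ∈ K, ∃ p ∈ B k, dist p.1 x ≤ v k) :
    Tendsto (fun k => hausdorffDist (B k) {p | p.1 ∈ K ∧ p.2 = f p.1}) atTop (𝓝 0) := by
  rw [Metric.tendsto_nhds]
  intro ε hε
  have hε3 : 0 < ε / 3 := by positivity
  obtain ⟨δ, hδ, hfδ⟩ :=
    Metric.uniformContinuousOn_iff.1 (hK.uniformContinuousOn_of_continuous hf) _ hε3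
  filter_upwards [hu.eventually (gt_mem_nhds hε3),
    hv.eventually (gt_mem_nhds (lt_min hδ hε3))] with k huk hvk
  have hvk' : v k < δ ∧ v k < ε / 3 := lt_min_iff.1 hvk
  have hD : hausdorffDist (B k) {p | p.1 ∈ K ∧ p.2 = f p.1} ≤ 2 * ε / 3 := by
    refine hausdorffDist_le_of_mem_dist (by positivity) (fun p hp => ?_) ?_
    · refine ⟨(p.1, f p.1), ⟨(hBK k hp).1, rfl⟩, ?_⟩
      rw [Prod.dist_eq, dist_self]
      exact max_le (by positivity) (by linarith [hvert k p hp])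
    · rintro ⟨x, y⟩ ⟨hx, hy⟩
      dsimp only at hx hy
      subst hy
      obtain ⟨p, hp, hpx⟩ := hhor k x hx
      have hfx : dist (f x) (f p.1) < ε / 3 :=
        hfδ x hx p.1 (hBK k hp).1 (by rw [dist_comm]; linarith)
      refine ⟨p, hp, ?_⟩
      rw [Prod.dist_eq, dist_comm x]
      refine max_le (by linarith) ?_
      linarith [dist_triangle (f x) (f p.1) p.2, hvert k p hp, dist_comm (f p.1) p.2]
  rw [Real.dist_0_eq_abs, abs_of_nonneg hausdorffDist_nonneg]
  linarith

theorem ContinuousOn.isCompact_graph {α β : Type*} [TopologicalSpace α] [TopologicalSpace β]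
    {K : Set α} {f : α → β} (hf : ContinuousOn f K) (hK : IsCompact K) :
    IsCompact {p : α × β | p.1 ∈ K ∧ p.2 = f p.1} := by
  convert hK.image_of_continuousOn (continuousOn_id.prodMk hf) using 1
  ext ⟨x, y⟩
  simp [eq_comm]

theorem IsCompact.eq_of_tendsto_hausdorffDist_iterate {α : Type*} [MetricSpace α]
    {F : Set α → Set α} {A Γ : Set α} (hA : IsCompact A) (hA₀ : A.Nonempty) (hΓ : IsCompact Γ)
    (hΓ₀ : Γ.Nonempty) (hFA : F A = A)
    (hlim : Tendsto (fun k => hausdorffDist (F^[k] A) Γ) atTop (𝓝 0)) : A = Γ := by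
  simp only [Function.iterate_fixed hFA] at hlim
  refine (hA.isClosed.hausdorffDist_zero_iff_eq hΓ.isClosed
    (hausdorffEDist_ne_top_of_nonempty_of_bounded hA₀ hΓ₀ hA.isBounded hΓ.isBounded)).1 ?_
  exact tendsto_nhds_unique tendsto_const_nhds hlim

section IFS

variable {S b h f : ℝ → ℝ} {l : ℕ → ℝ → ℝ} {N : ℕ} {I : Set ℝ}

theorem mem_ifsWSet {B : Set (ℝ × ℝ)} {p : ℝ × ℝ} :
    p ∈ ifsWSet S b h l N B ↔ ∃ n ∈ Finset.Icc 1 N, ∃ q ∈ B, ifsW S b h l n q = p := by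
  simp only [ifsWSet, mem_iUnion, mem_image, exists_prop]

theorem ifsWSet_iterate_subset (hl : ∀ n ∈ Finset.Icc 1 N, MapsTo (l n) I I)
    {B : Set (ℝ × ℝ)} (hB : B ⊆ I ×ˢ univ) (k : ℕ) :
    (ifsWSet S b h l N)^[k] B ⊆ I ×ˢ univ := by
  induction k with
  | zero => exact hB
  | succ k ih =>
    rw [Function.iterate_succ_apply']
    intro p hp
    obtain ⟨n, hn, q, hq, rfl⟩ := mem_ifsWSet.1 hp
    exact ⟨hl n hn (ih hq).1, trivial⟩

theorem ifsW_snd_sub (n : ℕ) (q : ℝ × ℝ)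
    (hf : f (l n q.1) = h (l n q.1) + S (l n q.1) * (f q.1 - b q.1)) :
    (ifsW S b h l n q).2 - f (ifsW S b h l n q).1 = S (l n q.1) * (q.2 - f q.1) := by
  simp only [ifsW, hf]
  ring

theorem ifsWSet_graph (hl : ∀ n ∈ Finset.Icc 1 N, MapsTo (l n) I I)
    (hcover : ∀ x ∈ I, ∃ n ∈ Finset.Icc 1 N, ∃ y ∈ I, l n y = x)
    (hf : ∀ n ∈ Finset.Icc 1 N, ∀ x ∈ I, f (l n x) = h (l n x) + S (l n x) * (f x - b x)) :
    ifsWSet S b h l N {p | p.1 ∈ I ∧ p.2 = f p.1} = {p | p.1 ∈ I ∧ p.2 = f p.1} := by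
  ext p
  constructor
  · intro hp
    obtain ⟨n, hn, q, ⟨hq, hfq⟩, rfl⟩ := mem_ifsWSet.1 hp
    refine ⟨hl n hn hq, ?_⟩
    rw [← sub_eq_zero, ifsW_snd_sub n q (hf n hn q.1 hq), hfq, sub_self, mul_zero]
  · rcases p with ⟨x, z⟩
    rintro ⟨hx, hz⟩
    dsimp only at hx hz
    obtain ⟨n, hn, y, hy, rfl⟩ := hcover x hx
    refine mem_ifsWSet.2 ⟨n, hn, (y, f y), ⟨hy, rfl⟩, Prod.ext rfl ?_⟩
    rw [hz]
    exact (hf n hn y hy).symm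

theorem abs_snd_sub_le_of_mem_ifsWSet_iterate {s M : ℝ} (hs : 0 ≤ s)
    (hl : ∀ n ∈ Finset.Icc 1 N, MapsTo (l n) I I) (hS : ∀ x ∈ I, |S x| ≤ s)
    (hf : ∀ n ∈ Finset.Icc 1 N, ∀ x ∈ I, f (l n x) = h (l n x) + S (l n x) * (f x - b x))
    {B : Set (ℝ × ℝ)} (hB : B ⊆ I ×ˢ univ) (hM : ∀ p ∈ B, |p.2 - f p.1| ≤ M) (k : ℕ) :
    ∀ p ∈ (ifsWSet S b h l N)^[k] B, |p.2 - f p.1| ≤ s ^ k * M := by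
  induction k with
  | zero => simpa using hM
  | succ k ih =>
    rw [Function.iterate_succ_apply']
    intro p hp
    obtain ⟨n, hn, q, hq, rfl⟩ := mem_ifsWSet.1 hp
    have hq₁ : q.1 ∈ I := (ifsWSet_iterate_subset hl hB k hq).1
    rw [ifsW_snd_sub n q (hf n hn q.1 hq₁), abs_mul, pow_succ', mul_assoc]
    exact mul_le_mul (hS _ (hl n hn hq₁)) (ih q hq) (abs_nonneg _) hs

theorem exists_mem_ifsWSet_iterate_abs_fst_sub_le {c D : ℝ} (hc : 0 ≤ c)
    (hl : ∀ n ∈ Finset.Icc 1 N, MapsTo (l n) I I)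
    (hcover : ∀ x ∈ I, ∃ n ∈ Finset.Icc 1 N, ∃ y ∈ I, l n y = x)
    (hlip : ∀ n ∈ Finset.Icc 1 N, ∀ x₁ ∈ I, ∀ x₂ ∈ I, |l n x₁ - l n x₂| ≤ c * |x₁ - x₂|)
    {B : Set (ℝ × ℝ)} (hB : B ⊆ I ×ˢ univ) (hD : ∀ x ∈ I, ∃ p ∈ B, |p.1 - x| ≤ D) (k : ℕ) :
    ∀ x ∈ I, ∃ p ∈ (ifsWSet S b h l N)^[k] B, |p.1 - x| ≤ c ^ k * D := by
  induction k with
  | zero => simpa using hD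
  | succ k ih =>
    intro x hx
    obtain ⟨n, hn, y, hy, rfl⟩ := hcover x hx
    obtain ⟨q, hq, hqy⟩ := ih y hy
    refine ⟨ifsW S b h l n q, ?_, ?_⟩
    · rw [Function.iterate_succ_apply']
      exact mem_ifsWSet.2 ⟨n, hn, q, hq, rfl⟩
    · calc |l n q.1 - l n y| ≤ c * |q.1 - y| :=
            hlip n hn _ (ifsWSet_iterate_subset hl hB k hq).1 y hy
        _ ≤ c * (c ^ k * D) := mul_le_mul_of_nonneg_left hqy hc
        _ = c ^ (k + 1) * D := by ring

theorem tendsto_hausdorffDist_ifsWSet_iterate_graph {x₀ x₁ s c : ℝ} (hs₀ : 0 ≤ s) (hs₁ : s < 1)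
    (hc₀ : 0 ≤ c) (hc₁ : c < 1) (hl : ∀ n ∈ Finset.Icc 1 N, MapsTo (l n) (Icc x₀ x₁) (Icc x₀ x₁))
    (hcover : ∀ x ∈ Icc x₀ x₁, ∃ n ∈ Finset.Icc 1 N, ∃ y ∈ Icc x₀ x₁, l n y = x)
    (hlip : ∀ n ∈ Finset.Icc 1 N, ∀ y₁ ∈ Icc x₀ x₁, ∀ y₂ ∈ Icc x₀ x₁,
      |l n y₁ - l n y₂| ≤ c * |y₁ - y₂|)
    (hS : ∀ x ∈ Icc x₀ x₁, |S x| ≤ s) (hfC : ContinuousOn f (Icc x₀ x₁))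
    (hf : ∀ n ∈ Finset.Icc 1 N, ∀ x ∈ Icc x₀ x₁,
      f (l n x) = h (l n x) + S (l n x) * (f x - b x))
    {B : Set (ℝ × ℝ)} (hB₀ : B.Nonempty) (hBc : IsCompact B) (hB : B ⊆ Icc x₀ x₁ ×ˢ univ) :
    Tendsto (fun k => hausdorffDist ((ifsWSet S b h l N)^[k] B)
      {p | p.1 ∈ Icc x₀ x₁ ∧ p.2 = f p.1}) atTop (𝓝 0) := by
  obtain ⟨M, hM⟩ := hBc.exists_bound_of_continuousOn (f := fun p : ℝ × ℝ => p.2 - f p.1)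
    (continuousOn_snd.sub (hfC.comp continuousOn_fst fun p hp => (hB hp).1))
  have hD : ∀ x ∈ Icc x₀ x₁, ∃ p ∈ B, |p.1 - x| ≤ x₁ - x₀ := fun x hx =>
    let ⟨p, hp⟩ := hB₀
    ⟨p, hp, Real.dist_le_of_mem_Icc (hB hp).1 hx⟩
  refine tendsto_hausdorffDist_graph isCompact_Icc hfC (u := fun k => s ^ k * M)
    (v := fun k => c ^ k * (x₁ - x₀)) ?_ ?_ (ifsWSet_iterate_subset hl hB)
    (abs_snd_sub_le_of_mem_ifsWSet_iterate hs₀ hl hS hf hB hM)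
    (exists_mem_ifsWSet_iterate_abs_fst_sub_le hc₀ hl hcover hlip hB hD)
  · simpa using (tendsto_pow_atTop_nhds_zero_of_lt_one hs₀ hs₁).mul_const M
  · simpa using (tendsto_pow_atTop_nhds_zero_of_lt_one hc₀ hc₁).mul_const (x₁ - x₀)

end IFS

section Partition

theorem MonotoneOn.Icc_subset_Icc_of_le {α : Type*} [Preorder α] {N : ℕ} {X : ℕ → α}
    (hX : MonotoneOn X (Iic N)) {i j : ℕ} (hij : i ≤ j) (hj : j ≤ N) :
    Icc (X i) (X j) ⊆ Icc (X 0) (X N) :=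
  Icc_subset_Icc (hX (by simp) (by simp; omega) (Nat.zero_le i))
    (hX (by simpa using hj) (by simp) hj)

variable {N : ℕ} {X : ℕ → ℝ} {l : ℕ → ℝ → ℝ} {L : ℝ → ℝ}

theorem exists_l_apply_L_eq (hN : 0 < N)
    (hL : ∀ n, 1 ≤ n → n ≤ N → ∀ x ∈ Ico (X (n - 1)) (X n), l n (L x) = x)
    (hLN : l N (L (X N)) = X N) {x : ℝ} (hx : x ∈ Icc (X 0) (X N)) :
    ∃ n ∈ Finset.Icc 1 N, l n (L x) = x := by
  rcases hx.2.eq_or_lt with rfl | hxN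
  · exact ⟨N, Finset.mem_Icc.2 ⟨hN, le_rfl⟩, hLN⟩
  · obtain ⟨i, hi, hxi⟩ := mem_iUnion₂.1 (Ico_subset_biUnion_Ico N X ⟨hx.1, hxN⟩)
    have hiN : i < N := Finset.mem_range.1 hi
    exact ⟨i + 1, Finset.mem_Icc.2 ⟨by omega, hiN⟩, hL (i + 1) (by omega) hiN x hxi⟩

/-- Away from the knots `L (lₙ x) = x`. At an interior knot `lₙ x = X n` the points `x` and
`L (X n)` are sent by `lₙ`, resp. `lₙ₊₁`, to an endpoint of their piece, so both lie in
`{X 0, X N}`, where `f = b`. -/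
theorem apply_l_eq_of_RBop_eq (hX : StrictMonoOn X (Iic N))
    (hl : ∀ n, 1 ≤ n → n ≤ N → ContinuousOn (l n) (Icc (X 0) (X N)) ∧
      BijOn (l n) (Icc (X 0) (X N)) (Icc (X (n - 1)) (X n)))
    (hLI : MapsTo L (Icc (X 0) (X N)) (Icc (X 0) (X N)))
    (hL : ∀ n, 1 ≤ n → n ≤ N → ∀ x ∈ Ico (X (n - 1)) (X n), l n (L x) = x)
    (hLN : l N (L (X N)) = X N) {S b h f : ℝ → ℝ} (hf₀ : f (X 0) = b (X 0))
    (hfN : f (X N) = b (X N)) (hfix : ∀ x ∈ Icc (X 0) (X N), RBop S L b h f x = f x) :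
    ∀ n ∈ Finset.Icc 1 N, ∀ x ∈ Icc (X 0) (X N),
      f (l n x) = h (l n x) + S (l n x) * (f x - b x) := by
  have hfb : ∀ m, 1 ≤ m → m ≤ N → ∀ z ∈ Icc (X 0) (X N),
      (l m z = X (m - 1) ∨ l m z = X m) → f z = b z := by
    intro m hm₁ hmN z hz hend
    obtain ⟨hcont, hbij⟩ := hl m hm₁ hmN
    rcases hcont.eq_or_eq_of_apply_eq_or_eq hbij.injOn hbij.mapsTo hz hend with rfl | rfl
    exacts [hf₀, hfN]
  intro n hn x hx
  obtain ⟨hn₁, hnN⟩ := Finset.mem_Icc.1 hn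
  have hbij := (hl n hn₁ hnN).2
  have hy := hbij.mapsTo hx
  have hyI := hX.monotoneOn.Icc_subset_Icc_of_le (Nat.sub_le n 1) hnN hy
  have hfy : h (l n x) + S (l n x) * (f (L (l n x)) - b (L (l n x))) = f (l n x) := hfix _ hyI
  suffices f (L (l n x)) - b (L (l n x)) = f x - b x by rw [← hfy, this]
  have hinj : l n (L (l n x)) = l n x → L (l n x) = x := hbij.injOn (hLI hyI) hx
  rcases hy.2.lt_or_eq with hlt | heq
  · rw [hinj (hL n hn₁ hnN _ ⟨hy.1, hlt⟩)]
  rcases hnN.lt_or_eq with hnN' | rfl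
  · have hnext : l n x ∈ Ico (X (n + 1 - 1)) (X (n + 1)) := by
      rw [Nat.add_sub_cancel, heq]
      exact ⟨le_rfl, hX (by simp; omega) (by simp; omega) (Nat.lt_succ_self n)⟩
    have hLy : l (n + 1) (L (l n x)) = X (n + 1 - 1) := by
      rw [hL (n + 1) (by omega) hnN' _ hnext, heq, Nat.add_sub_cancel]
    rw [hfb (n + 1) (by omega) hnN' _ (hLI hyI) (Or.inl hLy), hfb n hn₁ hnN x hx (Or.inr heq),
      sub_self, sub_self]
  · rw [hinj (by rw [heq]; exact hLN)]

end Partition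

theorem graph_is_unique_attractor_general
    (N : ℕ) (hN : 0 < N) (X Y : ℕ → ℝ)
    (hX : ∀ j, j < N → X j < X (j + 1))
    (l : ℕ → ℝ → ℝ)
    (hl : ∀ n, 1 ≤ n → n ≤ N → ContinuousOn (l n) (Icc (X 0) (X N)) ∧
      Set.BijOn (l n) (Icc (X 0) (X N)) (Icc (X (n - 1)) (X n)))
    (L : ℝ → ℝ)
    (hLI : Set.MapsTo L (Icc (X 0) (X N)) (Icc (X 0) (X N)))
    (hL : ∀ n, 1 ≤ n → n ≤ N → ∀ x ∈ Ico (X (n - 1)) (X n), l n (L x) = x)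
    (hLN : l N (L (X N)) = X N)
    (S : ℝ → ℝ) (s : ℝ) (hs : s < 1)
    (hSb : ∀ x ∈ Icc (X 0) (X N), |S x| ≤ s)
    (b h : ℝ → ℝ)
    (hb0 : b (X 0) = Y 0) (hbN : b (X N) = Y N)
    -- `f ∈ C**` is the fixed point of `T`
    (f : ℝ → ℝ)
    (hfC : ContinuousOn f (Icc (X 0) (X N)))
    (hfi : ∀ j ≤ N, f (X j) = Y j)
    (hfix : ∀ x ∈ Icc (X 0) (X N), RBop S L b h f x = f x)
    -- Lipschitz constants
    (lamL : ℝ) (hlamL1 : lamL < 1)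
    (hlipL : ∀ n, 1 ≤ n → n ≤ N → ∀ x₁ ∈ Icc (X 0) (X N), ∀ x₂ ∈ Icc (X 0) (X N),
      |l n x₁ - l n x₂| ≤ lamL * |x₁ - x₂|) :
    -- the graph of `f` is invariant
    ifsWSet S b h l N {p : ℝ × ℝ | p.1 ∈ Icc (X 0) (X N) ∧ p.2 = f p.1} =
      {p : ℝ × ℝ | p.1 ∈ Icc (X 0) (X N) ∧ p.2 = f p.1} ∧
    -- every nonempty compact subset of `I × ℝ` is attracted to the graph of `f`
    (∀ B : Set (ℝ × ℝ), B.Nonempty → IsCompact B → B ⊆ Icc (X 0) (X N) ×ˢ univ →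
      Tendsto
        (fun k => hausdorffDist ((ifsWSet S b h l N)^[k] B)
          {p : ℝ × ℝ | p.1 ∈ Icc (X 0) (X N) ∧ p.2 = f p.1})
        atTop (nhds 0)) ∧
    -- the graph of `f` is the unique attractor of `W`
    (∀ A : Set (ℝ × ℝ), A.Nonempty → IsCompact A → A ⊆ Icc (X 0) (X N) ×ˢ univ →
      ifsWSet S b h l N A = A →
      (∃ U : Set (ℝ × ℝ), IsOpen U ∧ A ⊆ U ∧
        ∀ B : Set (ℝ × ℝ), B.Nonempty → IsCompact B →
          B ⊆ U ∩ Icc (X 0) (X N) ×ˢ univ →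
          Tendsto (fun k => hausdorffDist ((ifsWSet S b h l N)^[k] B) A)
            atTop (nhds 0)) →
      A = {p : ℝ × ℝ | p.1 ∈ Icc (X 0) (X N) ∧ p.2 = f p.1}) := by
  have hXmono : StrictMonoOn X (Iic N) := strictMonoOn_Iic_of_lt_succ hX
  have hX0N : X 0 ≤ X N := hXmono.monotoneOn (by simp) (by simp) (Nat.zero_le N)
  have hmaps : ∀ n ∈ Finset.Icc 1 N, MapsTo (l n) (Icc (X 0) (X N)) (Icc (X 0) (X N)) :=
    fun n hn => (hl n (Finset.mem_Icc.1 hn).1 (Finset.mem_Icc.1 hn).2).2.mapsTo.mono_right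
      (hXmono.monotoneOn.Icc_subset_Icc_of_le (Nat.sub_le n 1) (Finset.mem_Icc.1 hn).2)
  have hcover : ∀ x ∈ Icc (X 0) (X N), ∃ n ∈ Finset.Icc 1 N, ∃ y ∈ Icc (X 0) (X N), l n y = x :=
    fun x hx =>
      let ⟨n, hn, hnx⟩ := exists_l_apply_L_eq hN hL hLN hx
      ⟨n, hn, L x, hLI hx, hnx⟩
  have hgraph := apply_l_eq_of_RBop_eq hXmono hl hLI hL hLN
    (by rw [hfi 0 (Nat.zero_le N), hb0]) (by rw [hfi N le_rfl, hbN]) hfix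
  have hs₀ : 0 ≤ s := (abs_nonneg _).trans (hSb _ (left_mem_Icc.2 hX0N))
  have hlamL₀ : 0 ≤ lamL := nonneg_of_mul_nonneg_left
    ((abs_nonneg _).trans (hlipL N hN le_rfl _ (left_mem_Icc.2 hX0N) _ (right_mem_Icc.2 hX0N)))
    (abs_pos.2 (sub_ne_zero.2 (hXmono (by simp) (by simp) hN).ne))
  have hattract := fun (B : Set (ℝ × ℝ)) (hB₀ : B.Nonempty) (hBc : IsCompact B)
      (hBI : B ⊆ Icc (X 0) (X N) ×ˢ univ) =>
    tendsto_hausdorffDist_ifsWSet_iterate_graph hs₀ hs hlamL₀ hlamL1 hmaps hcover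
      (fun n hn => hlipL n (Finset.mem_Icc.1 hn).1 (Finset.mem_Icc.1 hn).2) hSb hfC hgraph
      hB₀ hBc hBI
  refine ⟨ifsWSet_graph hmaps hcover hgraph, hattract, fun A hA₀ hAc hAI hWA _ => ?_⟩
  exact hAc.eq_of_tendsto_hausdorffDist_iterate hA₀ (hfC.isCompact_graph isCompact_Icc)
    ⟨(X 0, f (X 0)), left_mem_Icc.2 hX0N, rfl⟩ hWA (hattract A hA₀ hAc hAI)

/-- Suppose `s < 1`, let `f ∈ C**` be the unique fixed point of the
Read–Bajraktarević operator `T`, assume each `lₙ` is Lipschitz with constant `λ_l < 1`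
and `S : I → [−s, s]` is Lipschitz.  Then the IFS `W = (I × ℝ; w₁, …, w_N)` has a unique
attractor, namely the graph `Γ(f)` of `f`, and the basin of attraction is all of
`I × ℝ`: `W(Γ(f)) = Γ(f)` and `W^k(B) → Γ(f)` in the Hausdorff metric for every
nonempty compact `B ⊆ I × ℝ`. -/
theorem graph_is_unique_attractor
    (N : ℕ) (hN : 0 < N) (X Y : ℕ → ℝ)
    (hX : ∀ j, j < N → X j < X (j + 1))
    (l : ℕ → ℝ → ℝ)
    (hl : ∀ n, 1 ≤ n → n ≤ N → ContinuousOn (l n) (Icc (X 0) (X N)) ∧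
      Set.BijOn (l n) (Icc (X 0) (X N)) (Icc (X (n - 1)) (X n)))
    (L : ℝ → ℝ)
    (hLI : Set.MapsTo L (Icc (X 0) (X N)) (Icc (X 0) (X N)))
    (hL : ∀ n, 1 ≤ n → n ≤ N → ∀ x ∈ Ico (X (n - 1)) (X n), l n (L x) = x)
    (hLN : l N (L (X N)) = X N)
    (S : ℝ → ℝ) (s : ℝ) (hs : s < 1)
    (hSb : ∀ x ∈ Icc (X 0) (X N), |S x| ≤ s)
    (b h : ℝ → ℝ)
    (hbC : ContinuousOn b (Icc (X 0) (X N)))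
    (hb0 : b (X 0) = Y 0) (hbN : b (X N) = Y N)
    (hhC : ContinuousOn h (Icc (X 0) (X N)))
    (hh : ∀ j ≤ N, h (X j) = Y j)
    -- `f ∈ C**` is the fixed point of `T`
    (f : ℝ → ℝ)
    (hfC : ContinuousOn f (Icc (X 0) (X N)))
    (hfi : ∀ j ≤ N, f (X j) = Y j)
    (hfix : ∀ x ∈ Icc (X 0) (X N), RBop S L b h f x = f x)
    -- Lipschitz constants
    (lamL : ℝ) (hlamL1 : lamL < 1)
    (hlipL : ∀ n, 1 ≤ n → n ≤ N → ∀ x₁ ∈ Icc (X 0) (X N), ∀ x₂ ∈ Icc (X 0) (X N),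
      |l n x₁ - l n x₂| ≤ lamL * |x₁ - x₂|)
    (lamS : ℝ) (hlamS0 : 0 ≤ lamS)
    (hlipS : ∀ x₁ ∈ Icc (X 0) (X N), ∀ x₂ ∈ Icc (X 0) (X N),
      |S x₁ - S x₂| ≤ lamS * |x₁ - x₂|) :
    -- the graph of `f` is invariant
    ifsWSet S b h l N {p : ℝ × ℝ | p.1 ∈ Icc (X 0) (X N) ∧ p.2 = f p.1} =
      {p : ℝ × ℝ | p.1 ∈ Icc (X 0) (X N) ∧ p.2 = f p.1} ∧
    -- every nonempty compact subset of `I × ℝ` is attracted to the graph of `f`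
    (∀ B : Set (ℝ × ℝ), B.Nonempty → IsCompact B → B ⊆ Icc (X 0) (X N) ×ˢ univ →
      Tendsto
        (fun k => hausdorffDist ((ifsWSet S b h l N)^[k] B)
          {p : ℝ × ℝ | p.1 ∈ Icc (X 0) (X N) ∧ p.2 = f p.1})
        atTop (nhds 0)) ∧
    -- the graph of `f` is the unique attractor of `W`
    (∀ A : Set (ℝ × ℝ), A.Nonempty → IsCompact A → A ⊆ Icc (X 0) (X N) ×ˢ univ →
      ifsWSet S b h l N A = A →
      (∃ U : Set (ℝ × ℝ), IsOpen U ∧ A ⊆ U ∧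
        ∀ B : Set (ℝ × ℝ), B.Nonempty → IsCompact B →
          B ⊆ U ∩ Icc (X 0) (X N) ×ˢ univ →
          Tendsto (fun k => hausdorffDist ((ifsWSet S b h l N)^[k] B) A)
            atTop (nhds 0)) →
      A = {p : ℝ × ℝ | p.1 ∈ Icc (X 0) (X N) ∧ p.2 = f p.1}) :=
  graph_is_unique_attractor_general N hN X Y hX l hl L hLI hL hLN S s hs hSb b h hb0 hbN f hfC hfi
    hfix lamL hlamL1 hlipL
end

section
/- With T the Read–Bajraktarević operator and W = (I × ℝ; w_1, …, w_N) the associated IFS with maps w_n(x, y) = (l_n(x), h(l_n(x)) + S(l_n(x))(y − b(x))), the graph of Tg equals the image of the graph of g under W: Γ(Tg) = ⋃_{n=1}^N w_n(Γ(g)) for every g ∈ C*, where Γ(g) = {(x, g(x)) : x ∈ I}. -/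
open Set

/-- A continuous injection on `[a,b]` that is bijective onto `[c,d]` sends preimages of
endpoints to endpoints. -/
lemma endpoint_of_bijOn {a b c d : ℝ} (hab : a ≤ b) {f : ℝ → ℝ}
    (hf : ContinuousOn f (Icc a b)) (hbij : Set.BijOn f (Icc a b) (Icc c d))
    {t : ℝ} (ht : t ∈ Icc a b) (hft : f t = c ∨ f t = d) : t = a ∨ t = b := by
  have hcd : c ≤ d := by
    have := hbij.mapsTo ht
    exact le_trans this.1 this.2
  have hamem : a ∈ Icc a b := left_mem_Icc.mpr hab
  have hbmem : b ∈ Icc a b := right_mem_Icc.mpr hab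
  obtain ⟨u, hu, hfu⟩ := hbij.surjOn (left_mem_Icc.mpr hcd)
  obtain ⟨v, hv, hfv⟩ := hbij.surjOn (right_mem_Icc.mpr hcd)
  rcases hf.strictMonoOn_of_injOn_Icc' hab hbij.injOn with hm | hm
  · have hfa : f a = c := le_antisymm
      (by rw [← hfu]; exact hm.monotoneOn hamem hu hu.1) (hbij.mapsTo hamem).1
    have hfb : f b = d := le_antisymm (hbij.mapsTo hbmem).2
      (by rw [← hfv]; exact hm.monotoneOn hv hbmem hv.2)
    rcases hft with hc | hc
    · exact Or.inl (hbij.injOn ht hamem (by rw [hc, hfa]))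
    · exact Or.inr (hbij.injOn ht hbmem (by rw [hc, hfb]))
  · have hfa : f a = d := le_antisymm (hbij.mapsTo hamem).2
      (by rw [← hfv]; exact hm.antitoneOn hamem hv hv.1)
    have hfb : f b = c := le_antisymm
      (by rw [← hfu]; exact hm.antitoneOn hu hbmem hu.2) (hbij.mapsTo hbmem).1
    rcases hft with hc | hc
    · exact Or.inr (hbij.injOn ht hbmem (by rw [hc, hfb]))
    · exact Or.inl (hbij.injOn ht hamem (by rw [hc, hfa]))

/-- With `T` the Read–Bajraktarević operator and
`W = (I × ℝ; w₁, …, w_N)` the associated IFS, the graph of `Tg` equals the image of the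
graph of `g` under `W`: `Γ(Tg) = ⋃_{n=1}^N wₙ(Γ(g))` for every `g ∈ C*`. -/
theorem graph_RBop_eq_ifs_image_graph
    (N : ℕ) (hN : 0 < N) (X Y : ℕ → ℝ)
    (hX : ∀ j, j < N → X j < X (j + 1))
    (l : ℕ → ℝ → ℝ)
    (hl : ∀ n, 1 ≤ n → n ≤ N → ContinuousOn (l n) (Icc (X 0) (X N)) ∧
      Set.BijOn (l n) (Icc (X 0) (X N)) (Icc (X (n - 1)) (X n)))
    (L : ℝ → ℝ)
    (hLI : Set.MapsTo L (Icc (X 0) (X N)) (Icc (X 0) (X N)))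
    (hL : ∀ n, 1 ≤ n → n ≤ N → ∀ x ∈ Ico (X (n - 1)) (X n), l n (L x) = x)
    (hLN : l N (L (X N)) = X N)
    (S : ℝ → ℝ) (s : ℝ)
    (hSb : ∀ x ∈ Icc (X 0) (X N), |S x| ≤ s)
    (b h : ℝ → ℝ)
    (hbC : ContinuousOn b (Icc (X 0) (X N)))
    (hb0 : b (X 0) = Y 0) (hbN : b (X N) = Y N)
    (hhC : ContinuousOn h (Icc (X 0) (X N)))
    (hh : ∀ j ≤ N, h (X j) = Y j) :
    ∀ g : ℝ → ℝ, ContinuousOn g (Icc (X 0) (X N)) → g (X 0) = Y 0 → g (X N) = Y N →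
      {p : ℝ × ℝ | p.1 ∈ Icc (X 0) (X N) ∧ p.2 = RBop S L b h g p.1} =
        ⋃ n ∈ Finset.Icc 1 N,
          (ifsW S b h l n) '' {p : ℝ × ℝ | p.1 ∈ Icc (X 0) (X N) ∧ p.2 = g p.1} := by
  classical
  intro g hgC hg0 hgN
  -- monotonicity of X
  have mono : ∀ i j, i ≤ j → j ≤ N → X i ≤ X j := by
    intro i j hij hjN
    induction j with
    | zero => simp_all
    | succ k ih =>
      rcases eq_or_lt_of_le hij with rfl | hlt
      · rfl
      · exact le_trans (ih (Nat.lt_succ_iff.mp hlt) (le_of_lt (Nat.lt_of_succ_le hjN)))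
          (hX k (Nat.lt_of_succ_le hjN)).le
  -- g - b vanishes at the endpoints
  have hgb : ∀ t : ℝ, t = X 0 ∨ t = X N → g t - b t = 0 := by
    rintro t (rfl | rfl)
    · rw [hg0, hb0]; ring
    · rw [hgN, hbN]; ring
  ext p
  simp only [mem_setOf_eq, mem_iUnion, Finset.mem_Icc, exists_prop]
  constructor
  · rintro ⟨hp1, hp2⟩
    -- find the subinterval containing p.1
    obtain ⟨n, hn1, hnN, hln⟩ : ∃ n, 1 ≤ n ∧ n ≤ N ∧ l n (L p.1) = p.1 := by
      rcases eq_or_lt_of_le hp1.2 with hE | hlt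
      · exact ⟨N, hN, le_rfl, by rw [hE, hLN]⟩
      · have hex : ∃ k, p.1 < X k := ⟨N, hlt⟩
        set n := Nat.find hex with hn
        have hspec : p.1 < X n := Nat.find_spec hex
        have hn1 : 1 ≤ n := by
          rcases Nat.eq_zero_or_pos n with h0 | h1
          · rw [h0] at hspec; exact absurd hspec (not_lt.mpr hp1.1)
          · exact h1
        have hnN : n ≤ N := Nat.find_min' hex hlt
        have hlow : X (n - 1) ≤ p.1 :=
          not_lt.mp (Nat.find_min hex (Nat.sub_lt hn1 one_pos))
        exact ⟨n, hn1, hnN, hL n hn1 hnN p.1 ⟨hlow, hspec⟩⟩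
    refine ⟨n, ⟨hn1, hnN⟩, (L p.1, g (L p.1)), ⟨hLI hp1, rfl⟩, ?_⟩
    have : ifsW S b h l n (L p.1, g (L p.1)) =
        (l n (L p.1), h (l n (L p.1)) + S (l n (L p.1)) * (g (L p.1) - b (L p.1))) := rfl
    rw [this, hln]
    exact Prod.ext rfl (by rw [hp2]; rfl)
  · rintro ⟨n, ⟨hn1, hnN⟩, q, ⟨hq1, hq2⟩, rfl⟩
    have hX0N : X 0 ≤ X N := mono 0 N (Nat.zero_le N) le_rfl
    obtain ⟨hlC, hlB⟩ := hl n hn1 hnN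
    have hx : l n q.1 ∈ Icc (X (n - 1)) (X n) := hlB.mapsTo hq1
    have hxI : l n q.1 ∈ Icc (X 0) (X N) :=
      ⟨le_trans (mono 0 (n - 1) (Nat.zero_le _) (le_trans (Nat.sub_le n 1) hnN)) hx.1,
       le_trans hx.2 (mono n N hnN le_rfl)⟩
    refine ⟨hxI, ?_⟩
    show h (l n q.1) + S (l n q.1) * (q.2 - b q.1) =
      h (l n q.1) + S (l n q.1) * (g (L (l n q.1)) - b (L (l n q.1)))
    rcases eq_or_lt_of_le hx.2 with hE | hlt
    · -- l n q.1 = X n : endpoint case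
      rcases eq_or_lt_of_le hnN with rfl | hnltN
      · -- n = N, use hLN
        have h1 : l n (L (l n q.1)) = l n q.1 := by rw [hE, hLN]
        have : L (l n q.1) = q.1 := hlB.injOn (hLI hxI) hq1 h1
        rw [this, hq2]
      · -- n < N : both q.1 and L (l n q.1) are endpoints of I
        have hq1end : q.1 = X 0 ∨ q.1 = X N :=
          endpoint_of_bijOn hX0N hlC hlB hq1 (Or.inr hE)
        obtain ⟨hlC', hlB'⟩ := hl (n + 1) (Nat.le_succ_of_le hn1) hnltN
        have hsimp : n + 1 - 1 = n := rfl
        rw [hsimp] at hlB'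
        have hmem : l n q.1 ∈ Ico (X n) (X (n + 1)) := ⟨hE.ge, hE ▸ hX n hnltN⟩
        have h2 : l (n + 1) (L (l n q.1)) = l n q.1 := by
          have := hL (n + 1) (Nat.le_succ_of_le hn1) hnltN (l n q.1) (by rwa [hsimp])
          exact this
        have hLend : L (l n q.1) = X 0 ∨ L (l n q.1) = X N :=
          endpoint_of_bijOn hX0N hlC' hlB' (hLI hxI) (Or.inl (by rw [h2, hE]))
        rw [hq2, hgb _ hq1end, hgb _ hLend]
    · -- l n q.1 < X n : interior case, use hL n
      have h1 : l n (L (l n q.1)) = l n q.1 := hL n hn1 hnN _ ⟨hx.1, hlt⟩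
      have : L (l n q.1) = q.1 := hlB.injOn (hLI hxI) hq1 h1
      rw [this, hq2]
end

section
/- Suppose s < 1 and let f be the unique fixed point of the Read–Bajraktarević operator T. For any η ≥ 0, the band X_η = {(x, y) : x ∈ I, |y − f(x)| ≤ η} is mapped into itself by the IFS W: w_n(X_η) ⊆ X_η for every n = 1, …, N, where w_n(x, y) = (l_n(x), h(l_n(x)) + S(l_n(x))(y − b(x))). -/
open Set

/-- Suppose `s < 1` and let `f` be the unique fixed point of the
Read–Bajraktarević operator `T`.  For any `η ≥ 0`, the band
`X_η = {(x, y) : x ∈ I, |y − f(x)| ≤ η}` is mapped into itself by the IFS `W`: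
`wₙ(X_η) ⊆ X_η` for every `n = 1, …, N`. -/
theorem band_mapsTo_self
    (N : ℕ) (hN : 0 < N) (X Y : ℕ → ℝ)
    (hX : ∀ j, j < N → X j < X (j + 1))
    (l : ℕ → ℝ → ℝ)
    (hl : ∀ n, 1 ≤ n → n ≤ N → ContinuousOn (l n) (Icc (X 0) (X N)) ∧
      Set.BijOn (l n) (Icc (X 0) (X N)) (Icc (X (n - 1)) (X n)))
    (L : ℝ → ℝ)
    (hLI : Set.MapsTo L (Icc (X 0) (X N)) (Icc (X 0) (X N)))
    (hL : ∀ n, 1 ≤ n → n ≤ N → ∀ x ∈ Ico (X (n - 1)) (X n), l n (L x) = x)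
    (hLN : l N (L (X N)) = X N)
    (S : ℝ → ℝ) (s : ℝ) (hs : s < 1)
    (hSb : ∀ x ∈ Icc (X 0) (X N), |S x| ≤ s)
    (b h : ℝ → ℝ)
    (hbC : ContinuousOn b (Icc (X 0) (X N)))
    (hb0 : b (X 0) = Y 0) (hbN : b (X N) = Y N)
    (hhC : ContinuousOn h (Icc (X 0) (X N)))
    (hh : ∀ j ≤ N, h (X j) = Y j)
    -- `f ∈ C**` is the fixed point of `T`
    (f : ℝ → ℝ)
    (hfC : ContinuousOn f (Icc (X 0) (X N)))
    (hfi : ∀ j ≤ N, f (X j) = Y j)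
    (hfix : ∀ x ∈ Icc (X 0) (X N), RBop S L b h f x = f x)
    (η : ℝ) (hη : 0 ≤ η) :
    ∀ n, 1 ≤ n → n ≤ N →
      Set.MapsTo (ifsW S b h l n)
        {p : ℝ × ℝ | p.1 ∈ Icc (X 0) (X N) ∧ |p.2 - f p.1| ≤ η}
        {p : ℝ × ℝ | p.1 ∈ Icc (X 0) (X N) ∧ |p.2 - f p.1| ≤ η} := by
  -- X is monotone
  have hXle : ∀ i j : ℕ, i ≤ j → j ≤ N → X i ≤ X j := by
    intro i j hij hjN
    induction j with
    | zero => simp_all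
    | succ k ih =>
      rcases Nat.eq_or_lt_of_le hij with rfl | hlt
      · exact le_rfl
      · exact le_trans (ih (Nat.lt_succ_iff.mp hlt) (le_trans (Nat.le_succ k) hjN))
          (hX k hjN).le
  have hX0N : X 0 ≤ X N := hXle 0 N (Nat.zero_le _) le_rfl
  have hs0 : 0 ≤ s := le_trans (abs_nonneg _) (hSb (X 0) ⟨le_rfl, hX0N⟩)
  intro n h1 hn p hp
  obtain ⟨hpI, hpy⟩ := hp
  set x := p.1
  set y := p.2
  obtain ⟨hcont, hbij⟩ := hl n h1 hn
  have hx' : l n x ∈ Icc (X (n - 1)) (X n) := hbij.mapsTo hpI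
  have hsub : Icc (X (n - 1)) (X n) ⊆ Icc (X 0) (X N) :=
    Icc_subset_Icc (hXle 0 (n - 1) (Nat.zero_le _) (le_trans (Nat.sub_le n 1) hn))
      (hXle n N hn le_rfl)
  have hx'I : l n x ∈ Icc (X 0) (X N) := hsub hx'
  have key : h (l n x) + S (l n x) * (y - b x) - f (l n x) = S (l n x) * (y - f x) := by
    rcases lt_or_eq_of_le hx'.2 with hlt | heq
    · -- generic case : l n x ∈ Ico (X (n-1)) (X n), so L (l n x) = x
      have hico : l n x ∈ Ico (X (n - 1)) (X n) := ⟨hx'.1, hlt⟩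
      have hLmem : L (l n x) ∈ Icc (X 0) (X N) := hLI hx'I
      have hLx : L (l n x) = x :=
        hbij.injOn hLmem hpI (hL n h1 hn (l n x) hico)
      have := hfix (l n x) hx'I
      unfold RBop at this
      rw [hLx] at this
      rw [← this]; ring
    · -- endpoint case : l n x = X n, so x ∈ {X 0, X N} and b x = f x
      have hfx' : f (l n x) = h (l n x) := by
        rw [heq, hfi n hn, hh n hn]
      have hxend : x = X 0 ∨ x = X N := by
        have hXNmem : X N ∈ Icc (X 0) (X N) := ⟨hX0N, le_rfl⟩
        have hX0mem : X 0 ∈ Icc (X 0) (X N) := ⟨le_rfl, hX0N⟩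
        rcases hcont.strictMonoOn_of_injOn_Icc' hX0N hbij.injOn with hm | ha
        · right
          by_contra hne
          have hxlt : x < X N := lt_of_le_of_ne hpI.2 hne
          have : l n x < l n (X N) := hm hpI hXNmem hxlt
          exact absurd ((hbij.mapsTo hXNmem).2) (not_le.mpr (heq ▸ this))
        · left
          by_contra hne
          have hxgt : X 0 < x := lt_of_le_of_ne hpI.1 (Ne.symm hne)
          have : l n x < l n (X 0) := ha hX0mem hpI hxgt
          exact absurd ((hbij.mapsTo hX0mem).2) (not_le.mpr (heq ▸ this))
      have hbx : b x = f x := by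
        rcases hxend with he | he
        · rw [he, hb0, hfi 0 (Nat.zero_le _)]
        · rw [he, hbN, hfi N le_rfl]
      rw [hfx', hbx]; ring
  refine ⟨hx'I, ?_⟩
  show |h (l n x) + S (l n x) * (y - b x) - f (l n x)| ≤ η
  rw [key, abs_mul]
  calc |S (l n x)| * |y - f x| ≤ s * η :=
        mul_le_mul (hSb _ hx'I) hpy (abs_nonneg _) hs0
    _ ≤ 1 * η := mul_le_mul_of_nonneg_right hs.le hη
    _ = η := one_mul η
end

section
/- Let f : [0,1] → ℝ be the bilinear fractal interpolant for equally spaced knots X_j = j/N with Y̲_0 = Y̲_N = 0 and s_0 = s_N, and let γ = Σ_{n=1}^N (s_{n−1} + s_n)/2. For r ∈ ℕ let 𝒩(r) denote the minimal number of squares of the form [(k−1)/N^r, k/N^r] × [a, a + N^{−r}] (k ∈ {1, …, N^r}, a ∈ ℝ) needed to cover the graph Γ(f). If γ > 1 and Γ(f) is not a straight line segment, then 𝒩(r)/N^r → ∞ as r → ∞. -/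
open Set Filter

/-- The affine maps `lₙ(x) = (n−1)/N + x/N` for equally spaced knots. -/
noncomputable def eqL (N n : ℕ) (x : ℝ) : ℝ :=
  ((n : ℝ) - 1) / N + x / N

/-- The bilinear maps
`Bₙ(x, y) = aₙ x + [s_{n−1} + (s_n − s_{n−1}) x]·y + Y̲_{n−1}`, where
`aₙ = Y̲_n − Y̲_{n−1}` and `s_j = Ȳ_j − Y̲_j`. -/
def bilinB (Ylow Yup : ℕ → ℝ) (n : ℕ) (x y : ℝ) : ℝ :=
  (Ylow n - Ylow (n - 1)) * x +
    ((Yup (n - 1) - Ylow (n - 1)) +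
      ((Yup n - Ylow n) - (Yup (n - 1) - Ylow (n - 1))) * x) * y +
    Ylow (n - 1)

/-- `gridCount N M r` is the minimal number of squares of the form
`[(k−1)/Nʳ, k/Nʳ] × [a, a + N⁻ʳ]` (with `k ∈ {1, …, Nʳ}`, `a ∈ ℝ`) needed to cover
`M`. -/
noncomputable def gridCount (N : ℕ) (M : Set (ℝ × ℝ)) (r : ℕ) : ℕ :=
  sInf {m : ℕ | ∃ (k : Fin m → ℕ) (a : Fin m → ℝ),
    (∀ i, 1 ≤ k i ∧ k i ≤ N ^ r) ∧
    M ⊆ ⋃ i, Icc (((k i : ℝ) - 1) / (N : ℝ) ^ r) ((k i : ℝ) / (N : ℝ) ^ r) ×ˢ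
      Icc (a i) (a i + 1 / (N : ℝ) ^ r)}


/-!
The chord deviation `(w - u) f(v) - (w - v) f(u) - (v - u) f(w)` vanishes exactly when the three
graph points are collinear. Substituting the functional equation, the deviation of an image
triple `lₙ(u), lₙ(v), lₙ(w)` is `(s_{n-1} D_f + (s_n - s_{n-1}) D_{x f}) / N`: the affine part of
`Bₙ` contributes nothing. Summed over `n` the `D_{x f}` terms telescope away since `s_0 = s_N`,
leaving `γ/N` times the original deviation. Iterating from a non-collinear triple `(0, j/N, 1)`
with deviation `δ ≠ 0`, the deviations of its images in the `Nʳ` columns of width `N⁻ʳ` have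
absolute values summing to at least `|δ| (γ/N)ʳ`.

Conversely, by the intermediate value theorem the graph oscillates by at most `q N⁻ʳ` over a
column met by `q` squares of a cover, so that column contributes at most `q N⁻²ʳ`. Hence every
cover uses at least `|δ| γʳ Nʳ` squares.
-/

open Finset in
theorem Finset.sum_range_mul_eq_sum_sum {M : Type*} [AddCommMonoid M] (g : ℕ → M) (a b : ℕ) :
    ∑ i ∈ range (a * b), g i = ∑ m ∈ range a, ∑ k ∈ range b, g (m * b + k) := by
  induction a with
  | zero => simp
  | succ a ih => rw [Nat.succ_mul, sum_range_add, ih, sum_range_succ]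

open Finset in
theorem Finset.sum_Icc_one_eq_sum_range {M : Type*} [AddCommMonoid M] (g : ℕ → M) (N : ℕ) :
    ∑ n ∈ Icc 1 N, g n = ∑ m ∈ range N, g (m + 1) := by
  rw [← Ico_add_one_right_eq_Icc, sum_Ico_eq_sum_range]
  simp [add_comm]

def chordDeviation (f : ℝ → ℝ) (u v w : ℝ) : ℝ :=
  (w - u) * f v - (w - v) * f u - (v - u) * f w

lemma chordDeviation_zero_one (f : ℝ → ℝ) (x : ℝ) :
    chordDeviation f 0 x 1 = f x - ((f 1 - f 0) * x + f 0) := by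
  unfold chordDeviation; ring

lemma abs_chordDeviation_le {f : ℝ → ℝ} {u v w B : ℝ} (huv : u ≤ v) (hvw : v ≤ w)
    (h₁ : |f v - f u| ≤ B) (h₂ : |f w - f v| ≤ B) :
    |chordDeviation f u v w| ≤ (w - u) * B := by
  have : chordDeviation f u v w = (w - v) * (f v - f u) - (v - u) * (f w - f v) := by
    unfold chordDeviation; ring
  rw [this]
  calc _ ≤ |(w - v) * (f v - f u)| + |(v - u) * (f w - f v)| := abs_sub _ _
    _ ≤ (w - v) * B + (v - u) * B := by
        rw [abs_mul, abs_mul, abs_of_nonneg (sub_nonneg.2 hvw), abs_of_nonneg (sub_nonneg.2 huv)]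
        gcongr
    _ = (w - u) * B := by ring

section FunctionalEquation

variable {N : ℕ} {Ylow Yup : ℕ → ℝ} {f : ℝ → ℝ}

lemma chordDeviation_eqL (hN : N ≠ 0) {n : ℕ} {u v w : ℝ}
    (hfe : ∀ x ∈ Icc (0 : ℝ) 1, f (eqL N n x) = bilinB Ylow Yup n x (f x))
    (hu : u ∈ Icc (0 : ℝ) 1) (hv : v ∈ Icc (0 : ℝ) 1) (hw : w ∈ Icc (0 : ℝ) 1) :
    chordDeviation f (eqL N n u) (eqL N n v) (eqL N n w) =
      ((Yup (n - 1) - Ylow (n - 1)) * chordDeviation f u v w +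
        ((Yup n - Ylow n) - (Yup (n - 1) - Ylow (n - 1))) *
          chordDeviation (fun x => x * f x) u v w) / N := by
  rw [chordDeviation, hfe u hu, hfe v hv, hfe w hw]
  simp only [chordDeviation, eqL, bilinB]
  field_simp
  ring

lemma sum_chordDeviation_eqL (hN : N ≠ 0) (hsN : Yup 0 - Ylow 0 = Yup N - Ylow N)
    (hfe : ∀ n, 1 ≤ n → n ≤ N → ∀ x ∈ Icc (0 : ℝ) 1,
      f (eqL N n x) = bilinB Ylow Yup n x (f x))
    {u v w : ℝ} (hu : u ∈ Icc (0 : ℝ) 1) (hv : v ∈ Icc (0 : ℝ) 1) (hw : w ∈ Icc (0 : ℝ) 1) :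
    ∑ m ∈ Finset.range N,
        chordDeviation f (eqL N (m + 1) u) (eqL N (m + 1) v) (eqL N (m + 1) w) =
      (∑ n ∈ Finset.Icc 1 N, ((Yup (n - 1) - Ylow (n - 1)) + (Yup n - Ylow n)) / 2) / N *
        chordDeviation f u v w := by
  set s : ℕ → ℝ := fun j => Yup j - Ylow j
  have htel : ∑ m ∈ Finset.range N, (s (m + 1) - s m) = 0 := by
    rw [Finset.sum_range_sub]; exact sub_eq_zero.2 hsN.symm
  have hγ : ∑ n ∈ Finset.Icc 1 N, ((Yup (n - 1) - Ylow (n - 1)) + (Yup n - Ylow n)) / 2 =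
      ∑ m ∈ Finset.range N, s m := by
    rw [Finset.sum_Icc_one_eq_sum_range]
    have : ∀ m, (s m + s (m + 1)) / 2 = s m + (s (m + 1) - s m) / 2 := fun m => by ring
    simp only [Nat.add_sub_cancel, this, Finset.sum_add_distrib, ← Finset.sum_div, htel,
      zero_div, add_zero, s]
  rw [hγ, Finset.sum_congr rfl fun m hm => chordDeviation_eqL hN
    (hfe (m + 1) (by omega) (by simpa using Finset.mem_range.1 hm)) hu hv hw]
  simp only [Nat.add_sub_cancel, ← Finset.sum_div, Finset.sum_add_distrib, ← Finset.sum_mul]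
  rw [htel]
  ring

lemma mul_abs_chordDeviation_le_sum_abs (hN : N ≠ 0) (hsN : Yup 0 - Ylow 0 = Yup N - Ylow N)
    (hfe : ∀ n, 1 ≤ n → n ≤ N → ∀ x ∈ Icc (0 : ℝ) 1,
      f (eqL N n x) = bilinB Ylow Yup n x (f x))
    (hγ : 0 ≤ ∑ n ∈ Finset.Icc 1 N, ((Yup (n - 1) - Ylow (n - 1)) + (Yup n - Ylow n)) / 2) :
    ∀ u ∈ Icc (0 : ℝ) 1, ∀ v ∈ Icc (0 : ℝ) 1, ∀ w ∈ Icc (0 : ℝ) 1,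
      (∑ n ∈ Finset.Icc 1 N, ((Yup (n - 1) - Ylow (n - 1)) + (Yup n - Ylow n)) / 2) / N *
          |chordDeviation f u v w| ≤ ∑ m ∈ Finset.range N,
        |chordDeviation f (eqL N (m + 1) u) (eqL N (m + 1) v) (eqL N (m + 1) w)| := by
  intro u hu v hv w hw
  rw [← abs_of_nonneg (div_nonneg hγ N.cast_nonneg), ← abs_mul,
    ← sum_chordDeviation_eqL hN hsN hfe hu hv hw]
  exact Finset.abs_sum_le_sum_abs _ _

lemma exists_chordDeviation_ne_zero (hN : N ≠ 0) (hfi : ∀ j ≤ N, f ((j : ℝ) / N) = Ylow j)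
    (hline : ¬ ∃ c d : ℝ, ∀ j ≤ N, Ylow j = c * ((j : ℝ) / N) + d) :
    ∃ j ≤ N, chordDeviation f 0 (j / N) 1 ≠ 0 := by
  by_contra! h
  refine hline ⟨Ylow N - Ylow 0, Ylow 0, fun j hj => ?_⟩
  have hf₀ : f 0 = Ylow 0 := by simpa using hfi 0 (Nat.zero_le N)
  have hf₁ : f 1 = Ylow N := by
    simpa [div_self (Nat.cast_ne_zero.2 hN : (N : ℝ) ≠ 0)] using hfi N le_rfl
  have hdev := h j hj
  rw [chordDeviation_zero_one, hf₀, hf₁, hfi j hj] at hdev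
  linarith

end FunctionalEquation

section SelfSimilarity

variable {N : ℕ}

lemma add_div_pow_mem_Icc (hN : 0 < N) {r k : ℕ} (hk : k < N ^ r) {x : ℝ}
    (hx : x ∈ Icc (0 : ℝ) 1) : ((k : ℝ) + x) / (N : ℝ) ^ r ∈ Icc (0 : ℝ) 1 := by
  have hk' : (k : ℝ) + 1 ≤ (N : ℝ) ^ r := by exact_mod_cast hk
  constructor
  · have := hx.1; positivity
  · rw [div_le_one (by positivity)]; linarith [hx.2]

lemma eqL_add_div_pow (hN : 0 < N) (m r k : ℕ) (x : ℝ) :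
    eqL N (m + 1) (((k : ℝ) + x) / (N : ℝ) ^ r) =
      (((m * N ^ r + k : ℕ) : ℝ) + x) / (N : ℝ) ^ (r + 1) := by
  simp only [eqL]
  push_cast
  field_simp
  ring

lemma pow_mul_abs_le_sum_abs (hN : 0 < N) {c : ℝ} (hc : 0 ≤ c) {D : ℝ → ℝ → ℝ → ℝ}
    (hD : ∀ u ∈ Icc (0 : ℝ) 1, ∀ v ∈ Icc (0 : ℝ) 1, ∀ w ∈ Icc (0 : ℝ) 1,
      c * |D u v w| ≤ ∑ m ∈ Finset.range N,
        |D (eqL N (m + 1) u) (eqL N (m + 1) v) (eqL N (m + 1) w)|)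
    {u v w : ℝ} (hu : u ∈ Icc (0 : ℝ) 1) (hv : v ∈ Icc (0 : ℝ) 1) (hw : w ∈ Icc (0 : ℝ) 1)
    (r : ℕ) :
    c ^ r * |D u v w| ≤ ∑ k ∈ Finset.range (N ^ r),
      |D ((k + u) / (N : ℝ) ^ r) ((k + v) / (N : ℝ) ^ r) ((k + w) / (N : ℝ) ^ r)| := by
  induction r with
  | zero => simp
  | succ r ih =>
    calc c ^ (r + 1) * |D u v w| = c * (c ^ r * |D u v w|) := by ring
      _ ≤ ∑ k ∈ Finset.range (N ^ r),
            c * |D ((k + u) / (N : ℝ) ^ r) ((k + v) / (N : ℝ) ^ r) ((k + w) / (N : ℝ) ^ r)| := by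
          rw [← Finset.mul_sum]; gcongr
      _ ≤ ∑ k ∈ Finset.range (N ^ r), ∑ m ∈ Finset.range N,
            |D (((m * N ^ r + k : ℕ) + u) / (N : ℝ) ^ (r + 1))
              (((m * N ^ r + k : ℕ) + v) / (N : ℝ) ^ (r + 1))
              (((m * N ^ r + k : ℕ) + w) / (N : ℝ) ^ (r + 1))| := by
          refine Finset.sum_le_sum fun k hk => ?_
          have hk := Finset.mem_range.1 hk
          simpa only [eqL_add_div_pow hN] using hD _ (add_div_pow_mem_Icc hN hk hu)
            _ (add_div_pow_mem_Icc hN hk hv) _ (add_div_pow_mem_Icc hN hk hw)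
      _ = _ := by rw [Finset.sum_comm, Nat.pow_succ', Finset.sum_range_mul_eq_sum_sum]

end SelfSimilarity

section Covers

open scoped Finset

lemma abs_sub_le_card_mul {ι : Type*} {s : Finset ι} {a : ι → ℝ} {f : ℝ → ℝ} {u v h : ℝ}
    (huv : u ≤ v) (hh : 0 ≤ h) (hf : ContinuousOn f (Icc u v))
    (hcov : ∀ x ∈ Ioo u v, f x ∈ ⋃ i ∈ s, Icc (a i) (a i + h)) :
    |f v - f u| ≤ #s * h := by
  have himage : uIoo (f u) (f v) ⊆ ⋃ i ∈ s, Icc (a i) (a i + h) := by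
    have hIVT : uIoo (f u) (f v) ⊆ f '' Ioo u v := by
      rcases le_total (f u) (f v) with hle | hle
      · rw [uIoo_of_le hle]; exact intermediate_value_Ioo huv hf
      · rw [uIoo_of_ge hle]; exact intermediate_value_Ioo' huv hf
    rintro y hy
    obtain ⟨x, hx, rfl⟩ := hIVT hy
    exact hcov x hx
  have hvol := (MeasureTheory.measure_mono (μ := MeasureTheory.volume) himage).trans
    (MeasureTheory.measure_biUnion_finset_le s _)
  simp only [Real.volume_uIoo, Real.volume_Icc, add_sub_cancel_left, Finset.sum_const,
    nsmul_eq_mul] at hvol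
  rwa [← ENNReal.ofReal_natCast, ← ENNReal.ofReal_mul (by positivity),
    ENNReal.ofReal_le_ofReal_iff (by positivity)] at hvol

lemma eq_add_one_of_mem_Ioo_of_mem_Icc {d x : ℝ} (hd : 0 < d) {k κ : ℕ}
    (hk : x ∈ Ioo (k / d) ((k + 1) / d)) (hκ : x ∈ Icc ((κ - 1) / d) (κ / d)) : κ = k + 1 := by
  have hlo : k < κ := by
    exact_mod_cast (div_lt_div_iff_of_pos_right hd).1 (hk.1.trans_le hκ.2)
  have hhi : (κ : ℝ) < k + 2 := by
    linarith [(div_lt_div_iff_of_pos_right hd).1 (hκ.1.trans_lt hk.2)]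
  have hhi : κ < k + 2 := by exact_mod_cast hhi
  omega

variable {ι : Type*} [Fintype ι] {M : Set (ℝ × ℝ)} {f : ℝ → ℝ} {κ : ι → ℕ} {a : ι → ℝ}

lemma abs_sub_le_card_filter_div {d u v : ℝ} {k : ℕ} (hd : 0 < d)
    (hcov : M ⊆ ⋃ i, Icc (((κ i : ℝ) - 1) / d) ((κ i : ℝ) / d) ×ˢ Icc (a i) (a i + 1 / d))
    (hgraph : ∀ x ∈ Ioo u v, (x, f x) ∈ M) (hf : ContinuousOn f (Icc u v))
    (huv : u ≤ v) (hu : k / d ≤ u) (hv : v ≤ (k + 1) / d) :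
    |f v - f u| ≤ #{i | κ i = k + 1} / d := by
  rw [div_eq_mul_one_div]
  refine abs_sub_le_card_mul (a := a) huv (by positivity) hf fun x hx => ?_
  obtain ⟨i, hxi, hfxi⟩ := mem_iUnion.1 (hcov (hgraph x hx))
  have hκi := eq_add_one_of_mem_Ioo_of_mem_Icc hd ⟨hu.trans_lt hx.1, hx.2.trans_le hv⟩ hxi
  exact mem_iUnion₂.2 ⟨i, Finset.mem_filter.2 ⟨Finset.mem_univ i, hκi⟩, hfxi⟩

lemma abs_chordDeviation_le_card_filter_div {d u v w : ℝ} {k : ℕ} (hd : 0 < d)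
    (hcov : M ⊆ ⋃ i, Icc (((κ i : ℝ) - 1) / d) ((κ i : ℝ) / d) ×ˢ Icc (a i) (a i + 1 / d))
    (hgraph : ∀ x ∈ Ioo u w, (x, f x) ∈ M) (hf : ContinuousOn f (Icc u w))
    (huv : u ≤ v) (hvw : v ≤ w) (hu : k / d ≤ u) (hw : w ≤ (k + 1) / d) :
    |chordDeviation f u v w| ≤ #{i | κ i = k + 1} / d / d := by
  calc |chordDeviation f u v w| ≤ (w - u) * (#{i | κ i = k + 1} / d) :=
        abs_chordDeviation_le huv hvw
          (abs_sub_le_card_filter_div hd hcov (fun x hx => hgraph x ⟨hx.1, hx.2.trans_le hvw⟩)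
            (hf.mono (Icc_subset_Icc_right hvw)) huv hu (hvw.trans hw))
          (abs_sub_le_card_filter_div hd hcov (fun x hx => hgraph x ⟨huv.trans_lt hx.1, hx.2⟩)
            (hf.mono (Icc_subset_Icc_left huv)) hvw (hu.trans huv) hw)
    _ ≤ 1 / d * (#{i | κ i = k + 1} / d) := by
        gcongr
        calc w - u ≤ (k + 1) / d - k / d := by linarith
          _ = 1 / d := by ring
    _ = _ := by ring

lemma sum_card_filter_eq_add_one_le (κ : ι → ℕ) (n : ℕ) :
    ∑ k ∈ Finset.range n, #{i | κ i = k + 1} ≤ Fintype.card ι := by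
  calc ∑ k ∈ Finset.range n, #{i | κ i = k + 1}
      = ∑ j ∈ (Finset.range n).map (addRightEmbedding 1), #{i | κ i = j} := by
        rw [Finset.sum_map]; rfl
    _ = #{i | κ i ∈ (Finset.range n).map (addRightEmbedding 1)} :=
        Finset.sum_card_fiberwise_eq_card_filter _ _ _
    _ ≤ Fintype.card ι := Finset.card_filter_le _ _

end Covers

section GridCount

open scoped Finset

variable {N r : ℕ} {M : Set (ℝ × ℝ)} {f : ℝ → ℝ}

lemma sum_abs_chordDeviation_le_card_div {ι : Type*} [Fintype ι] {κ : ι → ℕ} {a : ι → ℝ}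
    (hN : 0 < N)
    (hcov : M ⊆ ⋃ i, Icc (((κ i : ℝ) - 1) / (N : ℝ) ^ r) ((κ i : ℝ) / (N : ℝ) ^ r) ×ˢ
      Icc (a i) (a i + 1 / (N : ℝ) ^ r))
    (hgraph : ∀ x ∈ Icc (0 : ℝ) 1, (x, f x) ∈ M) (hf : ContinuousOn f (Icc 0 1))
    {u v w : ℝ} (hu : 0 ≤ u) (huv : u ≤ v) (hvw : v ≤ w) (hw : w ≤ 1) :
    ∑ k ∈ Finset.range (N ^ r),
        |chordDeviation f ((k + u) / (N : ℝ) ^ r) ((k + v) / (N : ℝ) ^ r) ((k + w) / (N : ℝ) ^ r)|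
      ≤ Fintype.card ι / ((N : ℝ) ^ r) ^ 2 := by
  have hd : (0 : ℝ) < (N : ℝ) ^ r := by positivity
  calc _ ≤ ∑ k ∈ Finset.range (N ^ r), (#{i | κ i = k + 1} : ℝ) / (N : ℝ) ^ r / (N : ℝ) ^ r := by
        refine Finset.sum_le_sum fun k hk => ?_
        have hk := Finset.mem_range.1 hk
        have hcol : Icc (((k : ℝ) + u) / (N : ℝ) ^ r) ((k + w) / (N : ℝ) ^ r) ⊆ Icc 0 1 :=
          Icc_subset_Icc (add_div_pow_mem_Icc hN hk ⟨hu, by linarith⟩).1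
            (add_div_pow_mem_Icc hN hk ⟨by linarith, hw⟩).2
        refine abs_chordDeviation_le_card_filter_div hd hcov
          (fun x hx => hgraph x (hcol (Ioo_subset_Icc_self hx))) (hf.mono hcol)
          (by gcongr) (by gcongr) (by gcongr; linarith) (by gcongr)
    _ = (∑ k ∈ Finset.range (N ^ r), #{i | κ i = k + 1} : ℕ) / ((N : ℝ) ^ r) ^ 2 := by
        rw [← Finset.sum_div, ← Finset.sum_div, div_div, ← sq]; push_cast; rfl
    _ ≤ Fintype.card ι / ((N : ℝ) ^ r) ^ 2 := by
        gcongr; exact_mod_cast sum_card_filter_eq_add_one_le κ _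

lemma exists_nat_lt_le_le_add_one {t : ℝ} {n : ℕ} (ht : 0 ≤ t) (htn : t ≤ n) (hn : 0 < n) :
    ∃ j < n, (j : ℝ) ≤ t ∧ t ≤ j + 1 := by
  rcases lt_or_ge ⌊t⌋₊ n with h | h
  · exact ⟨⌊t⌋₊, h, Nat.floor_le ht, (Nat.lt_floor_add_one t).le⟩
  · have : (n : ℝ) ≤ t := (Nat.le_floor_iff ht).1 h
    refine ⟨n - 1, by omega, ?_, ?_⟩ <;> push_cast [Nat.cast_sub hn] <;> linarith

lemma exists_gridCover (hN : 0 < N) {C : ℝ} (hbox : M ⊆ Icc 0 1 ×ˢ Icc (-C) C) (r : ℕ) :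
    ∃ (m : ℕ) (k : Fin m → ℕ) (a : Fin m → ℝ), (∀ i, 1 ≤ k i ∧ k i ≤ N ^ r) ∧
      M ⊆ ⋃ i, Icc (((k i : ℝ) - 1) / (N : ℝ) ^ r) ((k i : ℝ) / (N : ℝ) ^ r) ×ˢ
        Icc (a i) (a i + 1 / (N : ℝ) ^ r) := by
  have hd : (0 : ℝ) < (N : ℝ) ^ r := by positivity
  set T := ⌈2 * C * (N : ℝ) ^ r⌉₊ + 1
  let e := Fintype.equivFin (Fin (N ^ r) × Fin T)
  refine ⟨_, fun i => (e.symm i).1 + 1, fun i => -C + (e.symm i).2 / (N : ℝ) ^ r,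
    fun i => ⟨Nat.le_add_left 1 _, (e.symm i).1.2⟩, ?_⟩
  rintro ⟨x, y⟩ hp
  obtain ⟨⟨hx₀, hx₁⟩, hy₀, hy₁⟩ := hbox hp
  obtain ⟨c, hc, hc₁, hc₂⟩ := exists_nat_lt_le_le_add_one (t := x * (N : ℝ) ^ r) (n := N ^ r)
    (by positivity) (by push_cast; nlinarith) (by positivity)
  have hyT : (y + C) * (N : ℝ) ^ r ≤ T :=
    calc (y + C) * (N : ℝ) ^ r ≤ 2 * C * (N : ℝ) ^ r := by gcongr; linarith
      _ ≤ T := by push_cast [T]; linarith [Nat.le_ceil (2 * C * (N : ℝ) ^ r)]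
  obtain ⟨j, hj, hj₁, hj₂⟩ := exists_nat_lt_le_le_add_one (t := (y + C) * (N : ℝ) ^ r) (n := T)
    (by nlinarith) hyT (Nat.succ_pos _)
  refine mem_iUnion.2 ⟨e (⟨c, hc⟩, ⟨j, hj⟩), ?_⟩
  simp only [Equiv.symm_apply_apply, mem_prod, mem_Icc]
  push_cast
  refine ⟨⟨?_, ?_⟩, ?_, ?_⟩
  · rw [add_sub_cancel_right, div_le_iff₀ hd]; exact hc₁
  · rw [le_div_iff₀ hd]; exact hc₂
  · have : (j : ℝ) / (N : ℝ) ^ r ≤ y + C := by rw [div_le_iff₀ hd]; exact hj₁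
    linarith
  · have : y + C ≤ ((j : ℝ) + 1) / (N : ℝ) ^ r := by rw [le_div_iff₀ hd]; exact hj₂
    rw [add_div] at this
    linarith

lemma le_gridCount (hN : 0 < N) {C : ℝ} (hbox : M ⊆ Icc 0 1 ×ˢ Icc (-C) C) {b : ℝ}
    (hb : ∀ (m : ℕ) (k : Fin m → ℕ) (a : Fin m → ℝ), (∀ i, 1 ≤ k i ∧ k i ≤ N ^ r) →
      M ⊆ ⋃ i, Icc (((k i : ℝ) - 1) / (N : ℝ) ^ r) ((k i : ℝ) / (N : ℝ) ^ r) ×ˢ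
        Icc (a i) (a i + 1 / (N : ℝ) ^ r) → b ≤ m) :
    b ≤ gridCount N M r := by
  obtain ⟨k, a, hk, hcov⟩ := Nat.sInf_mem (exists_gridCover hN hbox r)
  exact hb _ k a hk hcov

end GridCount

lemma abs_chordDeviation_mul_pow_le_gridCount_div {N : ℕ} {M : Set (ℝ × ℝ)} {f : ℝ → ℝ}
    {C c : ℝ} (hN : 0 < N) (hf : ContinuousOn f (Icc 0 1))
    (hbox : M ⊆ Icc 0 1 ×ˢ Icc (-C) C) (hgraph : ∀ x ∈ Icc (0 : ℝ) 1, (x, f x) ∈ M)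
    (hc : 0 ≤ c)
    (hself : ∀ u ∈ Icc (0 : ℝ) 1, ∀ v ∈ Icc (0 : ℝ) 1, ∀ w ∈ Icc (0 : ℝ) 1,
      c * |chordDeviation f u v w| ≤ ∑ m ∈ Finset.range N,
        |chordDeviation f (eqL N (m + 1) u) (eqL N (m + 1) v) (eqL N (m + 1) w)|)
    {u v w : ℝ} (hu : 0 ≤ u) (huv : u ≤ v) (hvw : v ≤ w) (hw : w ≤ 1) (r : ℕ) :
    |chordDeviation f u v w| * (c * N) ^ r ≤ gridCount N M r / (N : ℝ) ^ r := by
  have hd : (0 : ℝ) < (N : ℝ) ^ r := by positivity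
  have hlow := pow_mul_abs_le_sum_abs (u := u) (v := v) (w := w) hN hc hself
    ⟨hu, by linarith⟩ ⟨by linarith, by linarith⟩ ⟨by linarith, hw⟩ r
  rw [le_div_iff₀ hd]
  refine le_gridCount hN hbox fun m k a _ hcov => ?_
  have hup := sum_abs_chordDeviation_le_card_div hN hcov hgraph hf hu huv hvw hw
  rw [Fintype.card_fin] at hup
  calc |chordDeviation f u v w| * (c * N) ^ r * (N : ℝ) ^ r
      = c ^ r * |chordDeviation f u v w| * ((N : ℝ) ^ r) ^ 2 := by ring
    _ ≤ m := by rw [← le_div_iff₀ (by positivity)]; exact hlow.trans hup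

theorem gridCount_div_pow_tendsto_atTop_general
    (N : ℕ) (hN : 1 < N) (Ylow Yup : ℕ → ℝ)
    (hsN : Yup 0 - Ylow 0 = Yup N - Ylow N)
    (f : ℝ → ℝ)
    (hfC : ContinuousOn f (Icc (0 : ℝ) 1))
    (hfi : ∀ j ≤ N, f ((j : ℝ) / N) = Ylow j)
    (hfe : ∀ n, 1 ≤ n → n ≤ N → ∀ x ∈ Icc (0 : ℝ) 1,
      f (eqL N n x) = bilinB Ylow Yup n x (f x))
    (hγ : 1 < ∑ n ∈ Finset.Icc 1 N,
      ((Yup (n - 1) - Ylow (n - 1)) + (Yup n - Ylow n)) / 2)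
    (hline : ¬ ∃ c d : ℝ, ∀ j ≤ N, Ylow j = c * ((j : ℝ) / N) + d) :
    Tendsto
      (fun r : ℕ =>
        (gridCount N {p : ℝ × ℝ | p.1 ∈ Icc (0 : ℝ) 1 ∧ p.2 = f p.1} r : ℝ) /
          (N : ℝ) ^ r)
      atTop atTop := by
  set γ := ∑ n ∈ Finset.Icc 1 N, ((Yup (n - 1) - Ylow (n - 1)) + (Yup n - Ylow n)) / 2
  have hN₀ : 0 < N := by omega
  obtain ⟨j, hjN, hj⟩ := exists_chordDeviation_ne_zero hN₀.ne' hfi hline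
  obtain ⟨C, hC⟩ := isCompact_Icc.exists_bound_of_continuousOn hfC
  have hbox : {p : ℝ × ℝ | p.1 ∈ Icc (0 : ℝ) 1 ∧ p.2 = f p.1} ⊆ Icc 0 1 ×ˢ Icc (-C) C := by
    rintro ⟨x, y⟩ ⟨hx, hy : y = f x⟩
    exact ⟨hx, hy ▸ abs_le.1 (hC x hx)⟩
  have hbound (r : ℕ) : |chordDeviation f 0 (j / N) 1| * γ ^ r ≤
      gridCount N {p : ℝ × ℝ | p.1 ∈ Icc (0 : ℝ) 1 ∧ p.2 = f p.1} r / (N : ℝ) ^ r := by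
    have h := abs_chordDeviation_mul_pow_le_gridCount_div (u := 0) (v := j / N) (w := 1) hN₀ hfC
      hbox (fun x hx => ⟨hx, rfl⟩) (by positivity)
      (mul_abs_chordDeviation_le_sum_abs hN₀.ne' hsN hfe (by positivity)) le_rfl
      (by positivity) (div_le_one_of_le₀ (by exact_mod_cast hjN) (by positivity)) le_rfl r
    rwa [div_mul_cancel₀ γ (by positivity : (N : ℝ) ≠ 0)] at h
  exact tendsto_atTop_mono hbound
    ((tendsto_pow_atTop_atTop_of_one_lt hγ).const_mul_atTop (abs_pos.2 hj))

/-- Let `f : [0,1] → ℝ` be the bilinear fractal interpolant for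
equally spaced knots `X_j = j/N`, with `Y̲_0 = Y̲_N = 0` and `s_0 = s_N`, and let
`γ = Σₙ (s_{n−1} + s_n)/2`.  Let `𝒩(r)` be the minimal number of grid squares of side
`N⁻ʳ` (of the form `[(k−1)/Nʳ, k/Nʳ] × [a, a + N⁻ʳ]`) needed to cover the graph
`Γ(f)`.  If `γ > 1` and `Γ(f)` is not a straight line segment (i.e. the data points
`(j/N, Y̲_j)` are not collinear), then `𝒩(r)/Nʳ → ∞` as `r → ∞`. -/
theorem gridCount_div_pow_tendsto_atTop
    (N : ℕ) (hN : 1 < N) (Ylow Yup : ℕ → ℝ)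
    (hY : ∀ j ≤ N, 0 ≤ Ylow j ∧ Ylow j ≤ Yup j ∧ Yup j < 1)
    (hY0 : Ylow 0 = 0) (hYN : Ylow N = 0)
    (hsN : Yup 0 - Ylow 0 = Yup N - Ylow N)
    (f : ℝ → ℝ)
    (hfC : ContinuousOn f (Icc (0 : ℝ) 1))
    (hfi : ∀ j ≤ N, f ((j : ℝ) / N) = Ylow j)
    (hfe : ∀ n, 1 ≤ n → n ≤ N → ∀ x ∈ Icc (0 : ℝ) 1,
      f (eqL N n x) = bilinB Ylow Yup n x (f x))
    (hγ : 1 < ∑ n ∈ Finset.Icc 1 N,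
      ((Yup (n - 1) - Ylow (n - 1)) + (Yup n - Ylow n)) / 2)
    (hline : ¬ ∃ c d : ℝ, ∀ j ≤ N, Ylow j = c * ((j : ℝ) / N) + d) :
    Tendsto
      (fun r : ℕ =>
        (gridCount N {p : ℝ × ℝ | p.1 ∈ Icc (0 : ℝ) 1 ∧ p.2 = f p.1} r : ℝ) /
          (N : ℝ) ^ r)
      atTop atTop :=
  gridCount_div_pow_tendsto_atTop_general N hN Ylow Yup hsN f hfC hfi hfe hγ hline
end
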